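/- arXiv:0809.3131 — 10 statements merged into one kernel-verified Lean document; each statement's English description precedes it below -/
import Mathlib

section
/- Let α₁, ..., αₙ (n ≥ 2) be the roots of a monic irreducible polynomial p ∈ ℤ[x] of degree n with constant term (-1)^n, none of which is a root of unity. If exactly one root, say α₁, has modulus greater than one (so α₁ > 1 > |α₂| ≥ ... ≥ |αₙ| after reordering), then the only integer solutions (d₁,...,dₙ) to α₁^{d₁} · α₂^{d₂} ⋯ αₙ^{dₙ} = 1 are those with d₁ = d₂ = ⋯ = dₙ. -/
/-!
The product of all roots is `1`. Let `m` be an index at which `d` is maximal. A Galois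
automorphism sending `α m` to the large root `α j₀` permutes the roots and preserves
multiplicative relations, so it turns `∏ αₖ ^ dₖ = 1` into a relation in which the exponent of
`α j₀` is maximal. Dividing `(∏ αₖ) ^ d_m = 1` by it leaves a relation with nonnegative
exponents supported on the roots of modulus `< 1`; taking absolute values forces these
exponents to vanish.
-/

open Polynomial

theorem prod_eq_one_of_coeff_zero_prod_X_sub_C {R ι : Type*} [CommRing R] [Fintype ι]
    (α : ι → R) (h : (∏ i, (X - C (α i))).coeff 0 = (-1) ^ Fintype.card ι) :
    ∏ i, α i = 1 := by
  refine ((isUnit_neg_one (α := R)).pow (Fintype.card ι)).mul_left_cancel ?_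
  rw [← Finset.card_univ, ← Finset.prod_neg, mul_one, Finset.card_univ, ← h,
    coeff_zero_eq_eval_zero, eval_prod]
  simp

theorem eq_zero_of_prod_pow_eq_one {ι K : Type*} [Fintype ι] [NormedField K]
    (γ : ι → K) (m : ι → ℕ) (hm : ∀ k, ‖γ k‖ < 1 ∨ m k = 0) (h : ∏ k, γ k ^ m k = 1) (k : ι) :
    m k = 0 := by
  have hle : ∀ k ∈ Finset.univ, ‖γ k‖₊ ^ m k ≤ 1 := by
    intro k _
    rcases hm k with hk | hk
    · exact pow_le_one₀ zero_le hk.le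
    · simp [hk]
  have hone := (Finset.prod_eq_one_iff_of_le_one' hle).mp (by simpa using congrArg nnnorm h) k
    (Finset.mem_univ k)
  by_contra hmk
  have hk : ‖γ k‖₊ < 1 := mod_cast (hm k).resolve_right hmk
  exact (pow_lt_one₀ zero_le hk hmk).ne hone

theorem eq_of_prod_zpow_eq_one_of_le {ι K : Type*} [Fintype ι] [NormedField K] {γ : ι → K}
    (hγ : ∏ k, γ k = 1) {k₀ : ι} (hsmall : ∀ k, k ≠ k₀ → ‖γ k‖ < 1) {e : ι → ℤ}
    (hmax : ∀ k, e k ≤ e k₀) (hrel : ∏ k, γ k ^ e k = 1) (k : ι) : e k = e k₀ := by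
  have hne : ∀ k, γ k ≠ 0 := fun k hk => by
    simp [Finset.prod_eq_zero (Finset.mem_univ k) hk] at hγ
  set m : ι → ℕ := fun k => (e k₀ - e k).toNat
  have hm : ∀ k, (m k : ℤ) = e k₀ - e k := fun k => Int.toNat_of_nonneg (sub_nonneg.mpr (hmax k))
  have hshift : ∏ k, γ k ^ m k = 1 := calc
    ∏ k, γ k ^ m k = ∏ k, γ k ^ (e k₀ - e k) := by simp_rw [← zpow_natCast, hm]
    _ = (∏ k, γ k) ^ e k₀ / ∏ k, γ k ^ e k := by
      simp only [zpow_sub₀ (hne _), Finset.prod_div_distrib, Finset.prod_zpow]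
    _ = 1 := by rw [hγ, hrel, one_zpow, div_one]
  have hsupp : ∀ k, ‖γ k‖ < 1 ∨ m k = 0 := fun k => by
    rcases eq_or_ne k k₀ with rfl | hk
    · simp [m]
    · exact Or.inl (hsmall k hk)
  have := hm k
  rw [eq_zero_of_prod_pow_eq_one γ m hsupp hshift k] at this
  omega

theorem Function.Injective.exists_perm_apply_eq {ι M : Type*} [Finite ι] {β : ι → M}
    (hβ : Function.Injective β) {f : M → M} (hf : Function.Injective f)
    (h : ∀ k, f (β k) ∈ Set.range β) : ∃ τ : Equiv.Perm ι, ∀ k, β (τ k) = f (β k) := by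
  choose τ hτ using h
  have hτinj : Function.Injective τ := fun a b hab => hβ (hf (by rw [← hτ a, ← hτ b, hab]))
  exact ⟨Equiv.ofBijective τ (Finite.injective_iff_bijective.mp hτinj), hτ⟩

theorem exists_perm_prod_zpow_eq_one {K L ι : Type*} [Field K] [Field L] [Algebra K L]
    [Fintype ι] {q : K[X]} (hq : Irreducible q) {α : ι → L} (hα : Function.Injective α)
    (hroots : q.map (algebraMap K L) = ∏ k, (X - C (α k))) (i j : ι) :
    ∃ τ : Equiv.Perm ι, τ i = j ∧
      ∀ d : ι → ℤ, ∏ k, α k ^ d k = 1 → ∏ k, α (τ k) ^ d k = 1 := by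
  have hsplits : (q.map (algebraMap K L)).Splits := hroots ▸ Splits.prod fun k _ => Splits.X_sub_C _
  set E := IntermediateField.adjoin K (q.rootSet L)
  have := IntermediateField.adjoin_rootSet_isSplittingField hsplits
  have : Normal K E := Normal.of_isSplittingField q
  have hrootL : ∀ x : L, aeval x q = 0 ↔ ∃ k, x = α k := by
    intro x
    rw [aeval_def, ← eval_map, hroots, eval_prod, Finset.prod_eq_zero_iff]
    simp [sub_eq_zero]
  have hmem : ∀ k, α k ∈ E := fun k => IntermediateField.subset_adjoin _ _
    (mem_rootSet.mpr ⟨hq.ne_zero, (hrootL _).mpr ⟨k, rfl⟩⟩)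
  set β : ι → E := fun k => ⟨α k, hmem k⟩
  have hβ : Function.Injective β := fun a b hab => hα (congrArg Subtype.val hab)
  have hrootE : ∀ x : E, aeval x q = 0 ↔ ∃ k, x = β k := by
    intro x
    rw [← map_eq_zero_iff _ (algebraMap E L).injective, ← aeval_algebraMap_apply, hrootL]
    simp [β, Subtype.ext_iff]
  have hmin : ∀ k, minpoly K (β k) = q * C q.leadingCoeff⁻¹ := fun k =>
    (minpoly.eq_of_irreducible hq ((hrootE _).mpr ⟨k, rfl⟩)).symm
  obtain ⟨σ, hσ⟩ := (Normal.minpoly_eq_iff_mem_orbit E).mp ((hmin j).trans (hmin i).symm)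
  obtain ⟨τ, hτ⟩ : ∃ τ : Equiv.Perm ι, ∀ k, β (τ k) = σ (β k) := by
    refine hβ.exists_perm_apply_eq σ.injective fun k => ?_
    obtain ⟨l, hl⟩ := (hrootE (σ (β k))).mp (by
      rw [aeval_algEquiv, AlgHom.comp_apply, (hrootE _).mpr ⟨k, rfl⟩, map_zero])
    exact ⟨l, hl.symm⟩
  refine ⟨τ, hβ ((hτ i).trans hσ), fun d hd => ?_⟩
  have hβd : ∏ k, β k ^ d k = 1 := (algebraMap E L).injective (by simpa [β] using hd)
  calc ∏ k, α (τ k) ^ d k = algebraMap E L (σ (∏ k, β k ^ d k)) := by simp [← hτ, β]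
    _ = 1 := by rw [hβd, map_one, map_one]

theorem stmt_1_general (n : ℕ) (p : Polynomial ℤ) (hmonic : p.Monic)
    (hirr : Irreducible p)
    (hconst : p.coeff 0 = (-1) ^ n)
    (α : Fin n → ℂ)
    (hroots : p.map (Int.castRingHom ℂ) = ∏ i, (X - C (α i)))
    (j₀ : Fin n)
    (hsmall : ∀ i, i ≠ j₀ → ‖α i‖ < 1) :
    ∀ d : Fin n → ℤ, (∏ i, α i ^ d i) = 1 → ∀ i j, d i = d j := by
  intro d hd i j
  set q := p.map (Int.castRingHom ℚ)
  have hq : Irreducible q :=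
    (IsPrimitive.Int.irreducible_iff_irreducible_map_cast hmonic.isPrimitive).mp hirr
  have hqroots : q.map (algebraMap ℚ ℂ) = ∏ i, (X - C (α i)) := by
    rw [map_map, ← hroots]
    congr 1
  have hα : Function.Injective α := separable_prod_X_sub_C_iff.mp (hqroots ▸ hq.separable.map)
  have hprod : ∏ i, α i = 1 := prod_eq_one_of_coeff_zero_prod_X_sub_C α (by
    rw [← hroots, coeff_map, hconst]
    simp)
  obtain ⟨m, -, hm⟩ := Finset.exists_max_image Finset.univ d ⟨i, Finset.mem_univ i⟩
  obtain ⟨τ, hτ, hrel⟩ := exists_perm_prod_zpow_eq_one hq hα hqroots m j₀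
  have hd_eq : ∀ k, d k = d m :=
    eq_of_prod_zpow_eq_one_of_le (γ := α ∘ τ) ((Equiv.prod_comp τ α).trans hprod)
      (fun k hk => hsmall _ (hτ ▸ τ.injective.ne hk)) (fun k => hm k (Finset.mem_univ k))
      (hrel d hd)
  rw [hd_eq i, hd_eq j]

/-- If `p ∈ ℤ[x]` is monic irreducible of degree `n ≥ 2` with constant term `(-1)^n`,
none of its roots is a root of unity, and exactly one root `α j₀` has modulus
greater than one (that root being real and `> 1`), while all other roots have
modulus less than one, then the only integer solutions of
`∏ αᵢ^{dᵢ} = 1` are constant tuples. -/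
theorem stmt_1 (n : ℕ) (hn : 2 ≤ n) (p : Polynomial ℤ) (hmonic : p.Monic)
    (hirr : Irreducible p) (hdeg : p.natDegree = n)
    (hconst : p.coeff 0 = (-1) ^ n)
    (α : Fin n → ℂ)
    (hroots : p.map (Int.castRingHom ℂ) = ∏ i, (X - C (α i)))
    (hnru : ∀ i, ∀ k : ℕ, 0 < k → α i ^ k ≠ 1)
    (j₀ : Fin n) (hreal : (α j₀).im = 0) (hbig : 1 < (α j₀).re)
    (hbigabs : 1 < ‖α j₀‖)
    (hsmall : ∀ i, i ≠ j₀ → ‖α i‖ < 1) :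
    ∀ d : Fin n → ℤ, (∏ i, α i ^ d i) = 1 → ∀ i j, d i = d j :=
  stmt_1_general n p hmonic hirr hconst α hroots j₀ hsmall
end

section
/- Let p ∈ ℤ[x] be a monic irreducible polynomial of degree n with constant term (-1)^n whose roots α₁,...,αₙ are not roots of unity. Suppose the action of the Galois group G of p on the roots is doubly transitive. Then the set of roots has full rank: the only integer solutions (d₁,...,dₙ) to α₁^{d₁} ⋯ αₙ^{dₙ} = 1 are those with d₁ = ⋯ = dₙ. -/
/-!
The integer relations `d` with `∏ αᵢ ^ dᵢ = 1` form a subgroup `L` of `ℤⁿ` that contains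
`(1, …, 1)` (the product of the roots is `(-1)ⁿ p(0) = 1`), contains no nonzero multiple of a
basis vector (no root is a root of unity), and is stable under the permutations of the roots
induced by field embeddings. Fix `i` and average a relation `d` over the stabiliser `H` of `i`:
the result `u` is again a relation, and it is `H`-invariant, hence constant off `i` by double
transitivity. Subtracting a multiple of `(1, …, 1)` leaves a multiple of `eᵢ` in `L`, so `u` is
constant. Comparing `uᵢ = |H| dᵢ` with `∑ u = |H| ∑ d` gives `n dᵢ = ∑ d` for every `i`.
-/

open Polynomial

section Averaging

variable {ι : Type*}

theorem sum_comp_mem {M G : Type*} [AddCommMonoid M] [Fintype G] (f : G → ι → ι)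
    {L : AddSubmonoid (ι → M)} (hL : ∀ g, ∀ d ∈ L, d ∘ f g ∈ L) {d : ι → M} (hd : d ∈ L) :
    (fun m => ∑ g, d (f g m)) ∈ L := by
  convert L.sum_mem (t := Finset.univ) fun g _ => hL g d hd using 1
  ext m
  simp [Finset.sum_apply]

variable [DecidableEq ι]

theorem apply_eq_of_forall_ne_apply_eq {L : AddSubgroup (ι → ℤ)} (hone : 1 ∈ L)
    (hsingle : ∀ i (N : ℤ), Pi.single i N ∈ L → N = 0) {u : ι → ℤ} (hu : u ∈ L) {i : ι} {c : ℤ}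
    (hc : ∀ m, m ≠ i → u m = c) : u i = c := by
  have h : u - c • 1 = Pi.single i (u i - c) := by
    ext m
    by_cases hm : m = i
    · subst hm; simp
    · simp [hm, hc m hm]
  have := hsingle i _ (h ▸ L.sub_mem hu (L.zsmul_mem hone c))
  omega

variable [Fintype ι]

theorem card_mul_eq_sum_of_isTwoTransitive {G : Subgroup (Equiv.Perm ι)}
    (hG : ∀ i j k l : ι, i ≠ j → k ≠ l → ∃ π ∈ G, π i = k ∧ π j = l)
    {L : AddSubgroup (ι → ℤ)} (hL : ∀ π ∈ G, ∀ d ∈ L, d ∘ π ∈ L)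
    (hone : 1 ∈ L) (hsingle : ∀ i (N : ℤ), Pi.single i N ∈ L → N = 0)
    {d : ι → ℤ} (hd : d ∈ L) (i : ι) :
    Fintype.card ι * d i = ∑ j, d j := by
  classical
  let H : Subgroup (Equiv.Perm ι) := G ⊓ MulAction.stabilizer _ i
  set u : ι → ℤ := fun m => ∑ π : H, d ((π : Equiv.Perm ι) m) with hu
  have hu_mem : u ∈ L := sum_comp_mem (L := L.toAddSubmonoid) _ (fun π => hL _ π.2.1) hd
  have hu_inv : ∀ ρ : H, ∀ m, u ((ρ : Equiv.Perm ι) m) = u m := fun ρ m =>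
    Equiv.sum_comp (Equiv.mulRight ρ) (fun π : H => d ((π : Equiv.Perm ι) m))
  obtain ⟨c, hc⟩ : ∃ c, ∀ m, m ≠ i → u m = c := by
    by_cases h : ∃ j, j ≠ i
    · obtain ⟨j, hj⟩ := h
      refine ⟨u j, fun m hm => ?_⟩
      obtain ⟨π, hπG, hπi, hπj⟩ := hG i j i m hj.symm hm.symm
      rw [← hπj, hu_inv ⟨π, hπG, hπi⟩]
    · exact ⟨0, fun m hm => absurd ⟨m, hm⟩ h⟩
  have hui : u i = c := apply_eq_of_forall_ne_apply_eq hone hsingle hu_mem hc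
  have hu_const : ∀ m, u m = u i := fun m => by
    by_cases hm : m = i
    · rw [hm]
    · rw [hc m hm, hui]
  have hsum : ∑ m, u m = Fintype.card H * ∑ j, d j := by
    rw [Finset.sum_comm]
    simp [Equiv.sum_comp]
  have hu_i : u i = Fintype.card H * d i := by
    have hHi : ∀ π : H, (π : Equiv.Perm ι) i = i := fun π => π.2.2
    simp [hu, hHi]
  have hH : (Fintype.card H : ℤ) ≠ 0 := by exact_mod_cast Fintype.card_ne_zero
  refine mul_left_cancel₀ hH ?_
  rw [← hsum, Finset.sum_congr rfl fun m _ => hu_const m, Finset.sum_const, hu_i]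
  simp only [nsmul_eq_mul, Finset.card_univ]
  ring

theorem apply_eq_apply_of_isTwoTransitive {G : Subgroup (Equiv.Perm ι)}
    (hG : ∀ i j k l : ι, i ≠ j → k ≠ l → ∃ π ∈ G, π i = k ∧ π j = l)
    {L : AddSubgroup (ι → ℤ)} (hL : ∀ π ∈ G, ∀ d ∈ L, d ∘ π ∈ L)
    (hone : 1 ∈ L) (hsingle : ∀ i (N : ℤ), Pi.single i N ∈ L → N = 0)
    {d : ι → ℤ} (hd : d ∈ L) (i j : ι) : d i = d j := by
  have hcard : (Fintype.card ι : ℤ) ≠ 0 := by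
    have : Nonempty ι := ⟨i⟩
    exact_mod_cast Fintype.card_ne_zero
  refine mul_left_cancel₀ hcard ?_
  rw [card_mul_eq_sum_of_isTwoTransitive hG hL hone hsingle hd i,
    card_mul_eq_sum_of_isTwoTransitive hG hL hone hsingle hd j]

end Averaging

section Relations

variable {ι : Type*} [Fintype ι] {K : Type*}

def multRelations [CommGroupWithZero K] (α : ι → K) (hα : ∀ i, α i ≠ 0) :
    AddSubgroup (ι → ℤ) where
  carrier := {d | ∏ i, α i ^ d i = 1}
  zero_mem' := by simp
  add_mem' {d e} hd he := by
    simp_all only [Set.mem_ofPred_eq, Pi.add_apply, zpow_add₀ (hα _), Finset.prod_mul_distrib,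
      mul_one]
  neg_mem' {d} hd := by simp_all [zpow_neg, Finset.prod_inv_distrib]

@[simp]
theorem mem_multRelations [CommGroupWithZero K] {α : ι → K} {hα : ∀ i, α i ≠ 0} {d : ι → ℤ} :
    d ∈ multRelations α hα ↔ ∏ i, α i ^ d i = 1 :=
  Iff.rfl

theorem one_mem_multRelations [CommGroupWithZero K] {α : ι → K} (hα : ∀ i, α i ≠ 0) :
    1 ∈ multRelations α hα ↔ ∏ i, α i = 1 := by
  simp

theorem single_mem_multRelations [CommGroupWithZero K] [DecidableEq ι] {α : ι → K}
    (hα : ∀ i, α i ≠ 0) (i : ι) (N : ℤ) :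
    Pi.single i N ∈ multRelations α hα ↔ α i ^ N = 1 := by
  rw [mem_multRelations, Fintype.prod_eq_single i fun j hj => by simp [hj]]
  simp

theorem eq_zero_of_zpow_eq_one [GroupWithZero K] {x : K} (hx : ∀ k : ℕ, 0 < k → x ^ k ≠ 1)
    {N : ℤ} (hN : x ^ N = 1) : N = 0 := by
  obtain ⟨k, rfl | rfl⟩ := Int.eq_nat_or_neg N <;>
  · by_contra hk
    refine hx k (by omega) ?_
    simpa using hN

def rootPermMonoid [Field K] (α : ι → K) : Submonoid (Equiv.Perm ι) where
  carrier := {π | ∃ σ : K →+* K, ∀ m, σ (α m) = α (π m)}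
  one_mem' := ⟨RingHom.id K, fun _ => rfl⟩
  mul_mem' := fun ⟨σ, hσ⟩ ⟨τ, hτ⟩ => ⟨σ.comp τ, fun m => by simp [hσ, hτ]⟩

def rootPermGroup [Field K] (α : ι → K) : Subgroup (Equiv.Perm ι) :=
  { rootPermMonoid α with
    inv_mem' := fun {π} hπ => Submonoid.powers_le.mpr hπ <|
      mem_powers_iff_mem_zpowers.mpr <| inv_mem (Subgroup.mem_zpowers π) }

theorem comp_mem_multRelations [Field K] {α : ι → K} (hα : ∀ i, α i ≠ 0)
    {π : Equiv.Perm ι} (hπ : π ∈ rootPermGroup α) {d : ι → ℤ} (hd : d ∈ multRelations α hα) :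
    d ∘ π ∈ multRelations α hα := by
  obtain ⟨σ, hσ⟩ := inv_mem hπ
  have h := congrArg σ (mem_multRelations.mp hd)
  simp only [map_prod, map_zpow₀, map_one, hσ] at h
  rw [← Equiv.prod_comp π] at h
  simpa using h

end Relations

section Roots

variable {K : Type*} [Field K]

theorem prod_eq_one_of_coeff_zero {n : ℕ} {p : ℤ[X]} {α : Fin n → K}
    (hroots : p.map (Int.castRingHom K) = ∏ i, (X - C (α i))) (hconst : p.coeff 0 = (-1) ^ n) :
    ∏ i, α i = 1 := by
  have h := congrArg (coeff · 0) hroots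
  simp only [coeff_map, hconst, coeff_zero_prod, coeff_sub, coeff_X_zero, coeff_C_zero,
    zero_sub, Finset.prod_neg, Finset.card_univ, Fintype.card_fin] at h
  simpa using h

variable {ι : Type*} [Fintype ι]

theorem injective_of_irreducible_of_map_eq_prod [CharZero K] {p : ℤ[X]} {α : ι → K}
    (hmonic : p.Monic) (hirr : Irreducible p)
    (hroots : p.map (Int.castRingHom K) = ∏ i, (X - C (α i))) :
    Function.Injective α := by
  have hsep : ((p.map (algebraMap ℤ ℚ)).map (algebraMap ℚ K)).Separable :=
    (hmonic.irreducible_iff_irreducible_map_fraction_map.mp hirr).separable.map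
  rw [map_map, Subsingleton.elim ((algebraMap ℚ K).comp _) (Int.castRingHom K), hroots] at hsep
  exact separable_prod_X_sub_C_iff.mp hsep

theorem exists_perm_apply_eq {p : ℤ[X]} {α : ι → K} (hα : Function.Injective α)
    (hroots : p.map (Int.castRingHom K) = ∏ i, (X - C (α i))) (σ : K →+* K) :
    ∃ π : Equiv.Perm ι, ∀ m, σ (α m) = α (π m) := by
  have hroot : ∀ m, ∃ k, σ (α m) = α k := fun m => by
    have h : ((p.map (Int.castRingHom K)).map σ).IsRoot (σ (α m)) := by
      refine IsRoot.map ?_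
      simp [hroots, eval_prod, Finset.prod_eq_zero_iff, sub_eq_zero]
    rw [map_map, Subsingleton.elim (σ.comp _) (Int.castRingHom K), hroots] at h
    simpa [eval_prod, Finset.prod_eq_zero_iff, sub_eq_zero] using h
  choose g hg using hroot
  have hg_inj : Function.Injective g := fun a b hab => hα (σ.injective (by rw [hg, hg, hab]))
  exact ⟨Equiv.ofBijective g hg_inj.bijective_of_finite, hg⟩

end Roots

theorem stmt_2_general (n : ℕ) (p : Polynomial ℤ) (hmonic : p.Monic)
    (hirr : Irreducible p)
    (hconst : p.coeff 0 = (-1) ^ n)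
    (α : Fin n → ℂ)
    (hroots : p.map (Int.castRingHom ℂ) = ∏ i, (X - C (α i)))
    (hnru : ∀ i, ∀ k : ℕ, 0 < k → α i ^ k ≠ 1)
    (hdt : ∀ i j k l : Fin n, i ≠ j → k ≠ l →
      ∃ σ : ℂ →+* ℂ, σ (α i) = α k ∧ σ (α j) = α l) :
    ∀ d : Fin n → ℤ, (∏ i, α i ^ d i) = 1 → ∀ i j, d i = d j := by
  intro d hd
  have hprod : ∏ i, α i = 1 := prod_eq_one_of_coeff_zero hroots hconst
  have hα : ∀ i, α i ≠ 0 := fun i =>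
    Finset.prod_ne_zero_iff.mp (hprod ▸ one_ne_zero) i (Finset.mem_univ i)
  have hinj := injective_of_irreducible_of_map_eq_prod hmonic hirr hroots
  have hG : ∀ i j k l, i ≠ j → k ≠ l → ∃ π ∈ rootPermGroup α, π i = k ∧ π j = l := by
    intro i j k l hij hkl
    obtain ⟨σ, hσi, hσj⟩ := hdt i j k l hij hkl
    obtain ⟨π, hπ⟩ := exists_perm_apply_eq hinj hroots σ
    exact ⟨π, ⟨σ, hπ⟩, hinj (by rw [← hπ, hσi]), hinj (by rw [← hπ, hσj])⟩
  exact apply_eq_apply_of_isTwoTransitive hG (fun π hπ _ => comp_mem_multRelations hα hπ)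
    ((one_mem_multRelations hα).mpr hprod)
    (fun i _ h => eq_zero_of_zpow_eq_one (hnru i) ((single_mem_multRelations hα i _).mp h))
    (mem_multRelations.mpr hd)

/-- If `p ∈ ℤ[x]` is monic irreducible of degree `n` with constant term `(-1)^n`,
none of its roots is a root of unity, and the Galois action on the roots is
doubly transitive (any ordered pair of distinct roots can be carried to any other
by a field embedding), then the set of roots has full rank: the only integer
solutions of `∏ αᵢ^{dᵢ} = 1` are constant tuples. -/
theorem stmt_2 (n : ℕ) (hn : 2 ≤ n) (p : Polynomial ℤ) (hmonic : p.Monic)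
    (hirr : Irreducible p) (hdeg : p.natDegree = n)
    (hconst : p.coeff 0 = (-1) ^ n)
    (α : Fin n → ℂ)
    (hroots : p.map (Int.castRingHom ℂ) = ∏ i, (X - C (α i)))
    (hnru : ∀ i, ∀ k : ℕ, 0 < k → α i ^ k ≠ 1)
    (hdt : ∀ i j k l : Fin n, i ≠ j → k ≠ l →
      ∃ σ : ℂ →+* ℂ, σ (α i) = α k ∧ σ (α j) = α l) :
    ∀ d : Fin n → ℤ, (∏ i, α i ^ d i) = 1 → ∀ i j, d i = d j :=
  stmt_2_general n p hmonic hirr hconst α hroots hnru hdt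
end

section
/- Let G be a finite group acting on a set of size n. If the permutation representation of G on ℚⁿ is the direct sum of the trivial representation on ℚ·(1,1,...,1) and a representation on the orthogonal complement W that is irreducible over ℚ, and if α₁,...,αₙ are nonzero algebraic numbers (none a root of unity) permuted by G via an identification with the set, with α₁⋯αₙ = 1, then every integer solution (d₁,...,dₙ) of α₁^{d₁}⋯αₙ^{dₙ} = 1 satisfies d₁ = ⋯ = dₙ. -/
/-!
The relations `d` with `∏ αᵢ ^ dᵢ = 1` form a lattice `L ⊆ ℤⁿ` containing `(1, …, 1)`, and `L` is
stable under `G` because `G` acts through field embeddings. The `ℚ`-span of `L` meets the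
sum-zero hyperplane `W` in a `G`-stable subspace, so by irreducibility either `L ∩ W = 0`, which
forces every relation to be constant, or `L` spans `W` over `ℚ`. In the latter case a multiple of
`n eᵢ - (1, …, 1)`, hence of `eᵢ`, lies in `L`, making `αᵢ` a root of unity.
-/

section Relations

variable {ι M : Type*} [Fintype ι] [CommGroup M]

def relations (α : ι → M) : AddSubgroup (ι → ℤ) where
  carrier := {d | ∏ i, α i ^ d i = 1}
  zero_mem' := by simp
  add_mem' {d e} hd he := by
    simp_all only [Set.mem_ofPred_eq, Pi.add_apply, zpow_add, Finset.prod_mul_distrib, one_mul]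
  neg_mem' {d} hd := by
    simp_all only [Set.mem_ofPred_eq, Pi.neg_apply, zpow_neg, Finset.prod_inv_distrib, inv_one]

theorem mem_relations {α : ι → M} {d : ι → ℤ} : d ∈ relations α ↔ ∏ i, α i ^ d i = 1 :=
  Iff.rfl

theorem one_mem_relations {α : ι → M} (h : ∏ i, α i = 1) : 1 ∈ relations α := by
  simpa [mem_relations] using h

theorem pow_eq_one_of_single_mem_relations [DecidableEq ι] {α : ι → M} {i : ι} {k : ℤ}
    (h : Pi.single i k ∈ relations α) : α i ^ k = 1 := by
  rwa [mem_relations, Finset.prod_eq_single i (fun j _ hj => by simp [hj]) (by simp),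
    Pi.single_eq_same] at h

theorem comp_mem_relations {α : ι → M} (φ : M →* M) (π : Equiv.Perm ι)
    (hφ : ∀ i, φ (α (π i)) = α i) {d : ι → ℤ} (hd : d ∈ relations α) : d ∘ π ∈ relations α := by
  have := congrArg φ hd
  rw [map_prod, map_one, ← Equiv.prod_comp π] at this
  simpa [mem_relations, hφ] using this

end Relations

def sumZero (R ι : Type*) [Semiring R] [Fintype ι] : Submodule R (ι → R) where
  carrier := {v | ∑ i, v i = 0}
  zero_mem' := by simp
  add_mem' {v w} hv hw := by simp_all [Finset.sum_add_distrib]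
  smul_mem' c v hv := by simp_all [← Finset.mul_sum]

theorem mem_sumZero {R ι : Type*} [Semiring R] [Fintype ι] {v : ι → R} :
    v ∈ sumZero R ι ↔ ∑ i, v i = 0 :=
  Iff.rfl

section RatSpan

variable {ι : Type*}

/-- The `ℚ`-span of `L`, written with denominators cleared. -/
def ratSpan (L : AddSubgroup (ι → ℤ)) : Submodule ℚ (ι → ℚ) where
  carrier := {x | ∃ m : ℕ, 0 < m ∧ ∃ d ∈ L, ∀ i, (d i : ℚ) = m * x i}
  zero_mem' := ⟨1, one_pos, 0, L.zero_mem, by simp⟩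
  add_mem' := by
    rintro x y ⟨m, hm, d, hd, hdx⟩ ⟨m', hm', d', hd', hdy⟩
    refine ⟨m * m', by positivity, m' • d + m • d',
      L.add_mem (L.nsmul_mem hd _) (L.nsmul_mem hd' _), fun i => ?_⟩
    show ((m' • d i + m • d' i : ℤ) : ℚ) = _
    push_cast [Pi.add_apply, nsmul_eq_mul, hdx, hdy]
    ring
  smul_mem' := by
    rintro q x ⟨m, hm, d, hd, hdx⟩
    refine ⟨q.den * m, by positivity, q.num • d, L.zsmul_mem hd _, fun i => ?_⟩
    simp only [Pi.smul_apply, smul_eq_mul, Int.cast_mul, hdx, Nat.cast_mul]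
    rw [← Rat.mul_den_eq_num q]
    ring

theorem comp_mem_ratSpan {L : AddSubgroup (ι → ℤ)} {π : ι → ι} (hL : ∀ d ∈ L, d ∘ π ∈ L)
    {x : ι → ℚ} (hx : x ∈ ratSpan L) : x ∘ π ∈ ratSpan L := by
  obtain ⟨m, hm, d, hd, hdx⟩ := hx
  exact ⟨m, hm, d ∘ π, hL d hd, fun i => hdx (π i)⟩

variable [Fintype ι]

theorem eq_of_mem_of_ratSpan_inf_sumZero_eq_bot {L : AddSubgroup (ι → ℤ)}
    (hL : ratSpan L ⊓ sumZero ℚ ι = ⊥) (hone : 1 ∈ L) {d : ι → ℤ} (hd : d ∈ L) (i j : ι) :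
    d i = d j := by
  set w : ι → ℤ := Fintype.card ι • d - (∑ k, d k) • 1
  have hw : (fun k => (w k : ℚ)) ∈ ratSpan L ⊓ sumZero ℚ ι := by
    refine ⟨⟨1, one_pos, w, L.sub_mem (L.nsmul_mem hd _) (L.zsmul_mem hone _), by simp⟩, ?_⟩
    simp [mem_sumZero, w, Finset.sum_sub_distrib, ← Finset.mul_sum]
  rw [hL, Submodule.mem_bot] at hw
  have hw0 : ∀ k, (Fintype.card ι : ℤ) * d k = ∑ l, d l := fun k => by
    have hwk : (w k : ℚ) = 0 := congrFun hw k
    simpa [w, sub_eq_zero] using (Int.cast_eq_zero.mp hwk)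
  have : Nonempty ι := ⟨i⟩
  exact mul_left_cancel₀ (by positivity) ((hw0 i).trans (hw0 j).symm)

theorem exists_single_mem_of_sumZero_le_ratSpan [DecidableEq ι] {L : AddSubgroup (ι → ℤ)}
    (hL : sumZero ℚ ι ≤ ratSpan L) (hone : 1 ∈ L) (i : ι) :
    ∃ k : ℕ, 0 < k ∧ Pi.single i (k : ℤ) ∈ L := by
  have : Nonempty ι := ⟨i⟩
  have hv : Fintype.card ι • Pi.single i 1 - 1 ∈ sumZero ℚ ι := by
    simp [mem_sumZero, Finset.sum_sub_distrib, ← Finset.mul_sum]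
  obtain ⟨m, hm, d, hd, hdv⟩ := hL hv
  refine ⟨m * Fintype.card ι, by positivity, ?_⟩
  have : Pi.single i ((m * Fintype.card ι : ℕ) : ℤ) = d + (m : ℤ) • 1 := by
    ext j
    apply Int.cast_injective (α := ℚ)
    rcases eq_or_ne j i with rfl | hj
    · simp [hdv]
      ring
    · simp [hdv, hj]
  rw [this]
  exact L.add_mem hd (L.zsmul_mem hone _)

end RatSpan

theorem stmt_3_general (n : ℕ) (G : Type*) [Group G]
    (σ : G →* Equiv.Perm (Fin n))
    (hirrW : ∀ U : Submodule ℚ (Fin n → ℚ),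
      (∀ g : G, ∀ v ∈ U, (fun i => v (σ g i)) ∈ U) →
      (∀ v ∈ U, ∑ i, v i = 0) →
      (U = ⊥ ∨ ∀ v : Fin n → ℚ, (∑ i, v i = 0) → v ∈ U))
    (α : Fin n → ℂ)
    (hα0 : ∀ i, α i ≠ 0)
    (hnru : ∀ i, ∀ k : ℕ, 0 < k → α i ^ k ≠ 1)
    (hgal : ∀ g : G, ∃ φ : ℂ →+* ℂ, ∀ i, φ (α i) = α (σ g i))
    (hprod : ∏ i, α i = 1) :
    ∀ d : Fin n → ℤ, (∏ i, α i ^ d i) = 1 → ∀ i j, d i = d j := by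
  set u : Fin n → ℂˣ := fun i => Units.mk0 (α i) (hα0 i)
  have hrel : ∀ d, (∏ i, α i ^ d i) = 1 ↔ d ∈ relations u := fun d => by
    simp [mem_relations, ← Units.val_inj, u]
  set L := relations u
  have hLσ : ∀ g, ∀ d ∈ L, d ∘ σ g ∈ L := by
    intro g d hd
    obtain ⟨φ, hφ⟩ := hgal g⁻¹
    refine comp_mem_relations (Units.map φ) (σ g) (fun i => Units.ext ?_) hd
    simp [u, hφ, map_inv]
  have hone : 1 ∈ L := one_mem_relations (by simpa [← Units.val_inj, u] using hprod)
  set U := ratSpan L ⊓ sumZero ℚ (Fin n)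
  have hU : ∀ g : G, ∀ v ∈ U, (fun i => v (σ g i)) ∈ U := fun g v hv =>
    ⟨comp_mem_ratSpan (hLσ g) hv.1, by simpa [mem_sumZero, Equiv.sum_comp] using hv.2⟩
  rcases hirrW U hU (fun v hv => hv.2) with hbot | htop
  · exact fun d hd => eq_of_mem_of_ratSpan_inf_sumZero_eq_bot hbot hone ((hrel d).1 hd)
  · intro d _ i
    obtain ⟨k, hk, hkL⟩ :=
      exists_single_mem_of_sumZero_le_ratSpan (fun v hv => (htop v hv).1) hone i
    have hpow := congrArg Units.val (pow_eq_one_of_single_mem_relations hkL)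
    exact (hnru i k hk (by simpa [u] using hpow)).elim

/-- Let a finite group `G` act on `Fin n` via `σ : G →* Equiv.Perm (Fin n)`.
Suppose the permutation representation of `G` on `ℚⁿ` is the sum of the trivial
representation on `ℚ·(1,…,1)` and a `ℚ`-irreducible representation on the
complement `W = {v | ∑ vᵢ = 0}` (expressed here: every invariant subspace
contained in `W` is `⊥` or all of `W`).  If `α₁,…,αₙ` are nonzero algebraic
numbers, none a root of unity, permuted by `G` via field embeddings, with
`∏ αᵢ = 1`, then every integer solution of `∏ αᵢ^{dᵢ} = 1` is constant. -/
theorem stmt_3 (n : ℕ) (G : Type*) [Group G] [Finite G]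
    (σ : G →* Equiv.Perm (Fin n))
    (hirrW : ∀ U : Submodule ℚ (Fin n → ℚ),
      (∀ g : G, ∀ v ∈ U, (fun i => v (σ g i)) ∈ U) →
      (∀ v ∈ U, ∑ i, v i = 0) →
      (U = ⊥ ∨ ∀ v : Fin n → ℚ, (∑ i, v i = 0) → v ∈ U))
    (α : Fin n → ℂ)
    (hα0 : ∀ i, α i ≠ 0)
    (halg : ∀ i, IsAlgebraic ℚ (α i))
    (hnru : ∀ i, ∀ k : ℕ, 0 < k → α i ^ k ≠ 1)
    (hgal : ∀ g : G, ∃ φ : ℂ →+* ℂ, ∀ i, φ (α i) = α (σ g i))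
    (hprod : ∏ i, α i = 1) :
    ∀ d : Fin n → ℤ, (∏ i, α i ^ d i) = 1 → ∀ i j, d i = d j :=
  stmt_3_general n G σ hirrW α hα0 hnru hgal hprod
end

section
/- Let p₁ ∈ ℤ[x] be a monic polynomial of degree n ≥ 3 with constant term ±1, no root of modulus one, and roots α₁,...,αₙ. For each i ≥ 2, the polynomial pᵢ whose roots are the eigenvalue words of degree i (products of i roots of p₁ corresponding to Hall words, e.g., all products α_j α_k with j < k for i = 2) has at least one root of modulus greater than one and at least one root of modulus less than one. In particular, for i ≥ 2 there exist indices so that some product α_{j₁}^{i-1} α_{j₂} has modulus less than one. -/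
/-!
Take logarithms of the moduli of the roots: since the roots are units, these are nonzero reals
summing to zero. If the two smallest of them, `a ≤ b`, had `a + b ≥ 0`, then `b ≥ 0` and every
other one (there is at least one, as `n ≥ 3`) would be positive, contradicting the zero sum.
Hence `a < 0` and `(i - 1) a + b ≤ a + b < 0`. Negating all the logarithms gives the other half.
-/

open Polynomial

section OrderedGroup

variable {ι G : Type*} [Fintype ι] [AddCommGroup G] [LinearOrder G] [IsOrderedAddMonoid G]

theorem exists_add_neg_of_sum_eq_zero (x : ι → G) (hcard : 3 ≤ Fintype.card ι)
    (hsum : ∑ j, x j = 0) (hx : ∀ j, x j ≠ 0) :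
    ∃ a b, a ≠ b ∧ x a ≤ x b ∧ x a + x b < 0 := by
  classical
  obtain ⟨a, -, ha⟩ := Finset.exists_min_image Finset.univ x
    (Finset.univ_nonempty_iff.mpr (Fintype.card_pos_iff.mp (by omega)))
  have hcard_erase : 2 ≤ (Finset.univ.erase a).card := by
    rw [Finset.card_erase_of_mem (Finset.mem_univ a), Finset.card_univ]; omega
  obtain ⟨b, hb, hb_min⟩ := Finset.exists_min_image (Finset.univ.erase a) x
    (Finset.card_pos.mp (by omega))
  set rest := (Finset.univ.erase a).erase b
  have hrest : rest.Nonempty := by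
    rw [← Finset.card_pos, Finset.card_erase_of_mem hb]; omega
  refine ⟨a, b, (Finset.ne_of_mem_erase hb).symm, ha b (Finset.mem_univ b), ?_⟩
  by_contra! hab
  have hb_nonneg : 0 ≤ x b := by
    by_contra! hb_neg
    have ha_neg := (ha b (Finset.mem_univ b)).trans_lt hb_neg
    exact (add_neg_of_neg_of_nonpos ha_neg hb_neg.le).not_ge hab
  have hrest_pos : 0 < ∑ j ∈ rest, x j := Finset.sum_pos (fun j hj =>
    lt_of_le_of_ne (hb_nonneg.trans (hb_min j (Finset.mem_of_mem_erase hj))) (hx j).symm) hrest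
  have hsplit : ∑ j, x j = x a + x b + ∑ j ∈ rest, x j := by
    rw [add_assoc, Finset.add_sum_erase _ _ hb, Finset.add_sum_erase _ _ (Finset.mem_univ a)]
  exact (add_pos_of_nonneg_of_pos hab hrest_pos).ne' (hsplit ▸ hsum)

theorem exists_nsmul_add_neg_of_sum_eq_zero (x : ι → G) (hcard : 3 ≤ Fintype.card ι)
    (hsum : ∑ j, x j = 0) (hx : ∀ j, x j ≠ 0) {m : ℕ} (hm : m ≠ 0) :
    ∃ a b, a ≠ b ∧ m • x a + x b < 0 := by
  obtain ⟨a, b, hab, hle, hneg⟩ := exists_add_neg_of_sum_eq_zero x hcard hsum hx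
  have ha : x a ≤ 0 := by
    by_contra! ha; exact hneg.not_ge (add_nonneg ha.le (ha.le.trans hle))
  refine ⟨a, b, hab, lt_of_le_of_lt ?_ hneg⟩
  gcongr
  simpa using nsmul_le_nsmul_left_of_nonpos ha (Nat.one_le_iff_ne_zero.mpr hm)

theorem exists_nsmul_add_pos_of_sum_eq_zero (x : ι → G) (hcard : 3 ≤ Fintype.card ι)
    (hsum : ∑ j, x j = 0) (hx : ∀ j, x j ≠ 0) {m : ℕ} (hm : m ≠ 0) :
    ∃ a b, a ≠ b ∧ 0 < m • x a + x b := by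
  obtain ⟨a, b, hab, h⟩ := exists_nsmul_add_neg_of_sum_eq_zero (-x) hcard
    (by simp only [Pi.neg_apply, Finset.sum_neg_distrib, hsum, neg_zero])
    (fun j => neg_ne_zero.mpr (hx j)) hm
  rw [Pi.neg_apply, Pi.neg_apply, neg_nsmul, ← neg_add, neg_neg_iff_pos] at h
  exact ⟨a, b, hab, h⟩

end OrderedGroup

theorem prod_norm_eq_one_of_map_eq_prod {K ι : Type*} [NormedField K] [Fintype ι] (p : ℤ[X])
    (hconst : p.coeff 0 = 1 ∨ p.coeff 0 = -1) (α : ι → K)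
    (hroots : p.map (Int.castRingHom K) = ∏ j, (X - C (α j))) :
    ∏ j, ‖α j‖ = 1 := by
  have hcoeff : ((p.coeff 0 : ℤ) : K) = ∏ j, -α j := by
    rw [← eq_intCast (Int.castRingHom K), ← coeff_map, hroots, coeff_zero_eq_eval_zero, eval_prod]
    simp only [eval_sub, eval_X, eval_C, zero_sub]
  calc ∏ j, ‖α j‖ = ‖∏ j, -α j‖ := by simp only [norm_prod, norm_neg]
    _ = 1 := by rcases hconst with h | h <;> simp [← hcoeff, h]

theorem stmt_4_general (n : ℕ) (hn : 3 ≤ n) (p : Polynomial ℤ)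
    (hconst : p.coeff 0 = 1 ∨ p.coeff 0 = -1)
    (α : Fin n → ℂ)
    (hroots : p.map (Int.castRingHom ℂ) = ∏ j, (X - C (α j)))
    (hhyp : ∀ j, ‖α j‖ ≠ 1) :
    ∀ i : ℕ, 2 ≤ i →
      (∃ j₁ j₂ : Fin n, j₁ ≠ j₂ ∧ ‖α j₁ ^ (i - 1) * α j₂‖ < 1) ∧
      (∃ k₁ k₂ : Fin n, k₁ ≠ k₂ ∧ 1 < ‖α k₁ ^ (i - 1) * α k₂‖) := by
  intro i hi
  have hprod := prod_norm_eq_one_of_map_eq_prod p hconst α hroots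
  have hpos : ∀ j, 0 < ‖α j‖ := fun j => (norm_nonneg _).lt_of_ne'
    (Finset.prod_ne_zero_iff.mp (hprod ▸ one_ne_zero) j (Finset.mem_univ j))
  set x : Fin n → ℝ := fun j => Real.log ‖α j‖
  have hsum : ∑ j, x j = 0 := by
    rw [← Real.log_prod fun j _ => (hpos j).ne', hprod, Real.log_one]
  have hx : ∀ j, x j ≠ 0 := fun j => Real.log_ne_zero_of_pos_of_ne_one (hpos j) (hhyp j)
  have hcard : 3 ≤ Fintype.card (Fin n) := by rwa [Fintype.card_fin]
  have hlog : ∀ a b, Real.log ‖α a ^ (i - 1) * α b‖ = (i - 1) • x a + x b := fun a b => by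
    rw [norm_mul, norm_pow, Real.log_mul (pow_ne_zero _ (hpos a).ne') (hpos b).ne', Real.log_pow,
      nsmul_eq_mul]
  obtain ⟨j₁, j₂, hj, hneg⟩ := exists_nsmul_add_neg_of_sum_eq_zero x hcard hsum hx (m := i - 1)
    (by omega)
  obtain ⟨k₁, k₂, hk, hpos'⟩ := exists_nsmul_add_pos_of_sum_eq_zero x hcard hsum hx (m := i - 1)
    (by omega)
  rw [← hlog] at hneg hpos'
  exact ⟨⟨j₁, j₂, hj, not_le.mp fun h => hneg.not_ge (Real.log_nonneg h)⟩,
    ⟨k₁, k₂, hk, (Real.log_pos_iff (norm_nonneg _)).mp hpos'⟩⟩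

/-- Let `p₁ ∈ ℤ[x]` be monic of degree `n ≥ 3` with constant term `±1`, with no
root of modulus one.  For each `i ≥ 2`, among the eigenvalue words of degree `i`
(products of `i` roots, e.g. `α_{j₁}^{i-1}·α_{j₂}` with `j₁ ≠ j₂`) there is one
of modulus less than one and one of modulus greater than one. -/
theorem stmt_4 (n : ℕ) (hn : 3 ≤ n) (p : Polynomial ℤ) (hmonic : p.Monic)
    (hdeg : p.natDegree = n)
    (hconst : p.coeff 0 = 1 ∨ p.coeff 0 = -1)
    (α : Fin n → ℂ)
    (hroots : p.map (Int.castRingHom ℂ) = ∏ j, (X - C (α j)))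
    (hhyp : ∀ j, ‖α j‖ ≠ 1) :
    ∀ i : ℕ, 2 ≤ i →
      (∃ j₁ j₂ : Fin n, j₁ ≠ j₂ ∧ ‖α j₁ ^ (i - 1) * α j₂‖ < 1) ∧
      (∃ k₁ k₂ : Fin n, k₁ ≠ k₂ ∧ 1 < ‖α k₁ ^ (i - 1) * α k₂‖) :=
  stmt_4_general n hn p hconst α hroots hhyp
end

section
/- The polynomial p(x) = xⁿ - x - 1 (n ≥ 2) has no roots of modulus one. -/
/-! If `‖z‖ = 1` and `zⁿ = z + 1`, then `‖z + 1‖ = 1` too, which forces `z² + z + 1 = 0`: `z` is a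
primitive cube root of unity and `z + 1 = -z²`. Cubing `zⁿ = -z²` then gives `1 = -1`. -/

open ComplexConjugate

theorem RCLike.sq_add_self_add_one_eq_zero_of_norm_eq_one {K : Type*} [RCLike K] {z : K}
    (hz : ‖z‖ = 1) (hz₁ : ‖z + 1‖ = 1) : z ^ 2 + z + 1 = 0 := by
  have h : z * conj z = 1 := by rw [RCLike.mul_conj, hz]; norm_num
  have h₁ : (z + 1) * (conj z + 1) = 1 := by
    simpa [RCLike.mul_conj, hz₁] using RCLike.mul_conj (z + 1)
  have hconj : conj z = -1 - z := by linear_combination h₁ - h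
  rw [hconj] at h
  linear_combination -h

theorem pow_ne_add_one_of_sq_add_self_add_one_eq_zero {R : Type*} [CommRing R]
    (h2 : (2 : R) ≠ 0) {z : R} (hz : z ^ 2 + z + 1 = 0) (n : ℕ) : z ^ n ≠ z + 1 := by
  intro hn
  have hcube : z ^ 3 = 1 := by linear_combination (z - 1) * hz
  have hz₁ : z + 1 = -z ^ 2 := by linear_combination hz
  have : (1 : R) = -1 :=
    calc (1 : R) = (z ^ 3) ^ n := by rw [hcube, one_pow]
      _ = (z ^ n) ^ 3 := by ring
      _ = -(z ^ 3) ^ 2 := by rw [hn, hz₁]; ring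
      _ = -1 := by rw [hcube, one_pow]
  exact h2 (by linear_combination this)

theorem stmt_7_general (n : ℕ) (z : ℂ) (hz : z ^ n - z - 1 = 0) :
    ‖z‖ ≠ 1 := by
  intro h
  have hpow : z ^ n = z + 1 := by linear_combination hz
  have h₁ : ‖z + 1‖ = 1 := by rw [← hpow, norm_pow, h, one_pow]
  exact pow_ne_add_one_of_sq_add_self_add_one_eq_zero two_ne_zero
    (RCLike.sq_add_self_add_one_eq_zero_of_norm_eq_one h h₁) n hpow

/-- The polynomial `xⁿ - x - 1` (`n ≥ 2`) has no roots of modulus one. -/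
theorem stmt_7 (n : ℕ) (hn : 2 ≤ n) (z : ℂ) (hz : z ^ n - z - 1 = 0) :
    ‖z‖ ≠ 1 :=
  stmt_7_general n z hz
end

section
/- Let p ∈ ℤ[x] be monic of degree n ≥ 2 whose splitting field K has Galois group of odd order over ℚ. If q ∈ ℤ[x] is a monic irreducible polynomial whose splitting field is contained in K and q has a root λ with |λ| = 1, then q is linear and λ = ±1. -/
/-!
The complex roots of `q` generate a subfield `M ⊆ ℂ` that is normal over `ℚ` and embeds into the
splitting field of `p`, so `[M : ℚ]` divides an odd number. Complex conjugation restricts to an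
automorphism of `M` of order dividing 2 in a group of odd order, hence fixes `M`: the root `λ` is
real, so `λ = ±1`, and an irreducible integer polynomial with an integer root is linear.
-/

open Polynomial Module

theorem finrank_adjoin_rootSet_dvd {F Ω K : Type*} [Field F] [Field Ω] [Field K]
    [Algebra F Ω] [Algebra F K] {f : F[X]}
    (hΩ : (f.map (algebraMap F Ω)).Splits) (hK : (f.map (algebraMap F K)).Splits) :
    finrank F (IntermediateField.adjoin F (f.rootSet Ω)) ∣ finrank F K := by
  have := IntermediateField.adjoin_rootSet_isSplittingField hΩ
  let g := IsSplittingField.lift (IntermediateField.adjoin F (f.rootSet Ω)) f hK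
  rw [(AlgEquiv.ofInjectiveField g).toLinearEquiv.finrank_eq]
  exact finrank_dvd_finrank_right F g.fieldRange K

theorem conj_eq_self_of_mem_of_normal_of_odd_finrank (M : IntermediateField ℚ ℂ) [Normal ℚ M]
    (hodd : Odd (finrank ℚ M)) {z : ℂ} (hz : z ∈ M) : starRingEnd ℂ z = z := by
  have : FiniteDimensional ℚ M := Module.finite_of_finrank_pos hodd.pos
  have : IsGalois ℚ M := ⟨⟩
  have hcard : (Nat.card Gal(M/ℚ)).Coprime 2 := by
    rwa [IsGalois.card_aut_eq_finrank, Nat.coprime_two_right]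
  let σ := (Complex.conjAe.restrictScalars ℚ).restrictNormal M
  have hσ_apply (y : M) : (σ y : ℂ) = starRingEnd ℂ y :=
    AlgEquiv.restrictNormal_commutes _ M y
  have hσ : σ = 1 := (Nat.Coprime.pow_left_bijective hcard).injective <| by
    ext y
    simp only [pow_two, AlgEquiv.mul_apply, AlgEquiv.one_apply, hσ_apply,
      Complex.conj_conj]
  simpa [hσ] using (hσ_apply ⟨z, hz⟩).symm

theorem eq_one_or_eq_neg_one_of_im_eq_zero_of_norm_eq_one {z : ℂ} (him : z.im = 0)
    (hnorm : ‖z‖ = 1) : z = 1 ∨ z = -1 := by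
  rw [← Complex.abs_re_eq_norm.mpr him, abs_eq zero_le_one] at hnorm
  rcases hnorm with h | h
  · exact Or.inl (Complex.ext (by simpa using h) (by simpa using him))
  · exact Or.inr (Complex.ext (by simpa using h) (by simpa using him))

theorem natDegree_eq_one_of_irreducible_of_aeval_eq_zero {R A : Type*} [CommRing R] [IsDomain R]
    [CommRing A] [Algebra R A] [FaithfulSMul R A] {f : R[X]} (hf : Irreducible f) {a : R}
    (ha : aeval (algebraMap R A a) f = 0) : f.natDegree = 1 := by
  rw [aeval_algebraMap_apply, map_eq_zero_iff _ (FaithfulSMul.algebraMap_injective R A)] at ha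
  exact natDegree_eq_of_degree_eq_some (degree_eq_one_of_irreducible_of_root hf ha)

theorem stmt_9_general (p q : Polynomial ℤ)
    (hodd : Odd (Fintype.card ((p.map (Int.castRingHom ℚ)).SplittingField ≃ₐ[ℚ]
      (p.map (Int.castRingHom ℚ)).SplittingField)))
    (hqirr : Irreducible q)
    (hsplit : Polynomial.Splits
      ((q.map (Int.castRingHom ℚ)).map
        (algebraMap ℚ (p.map (Int.castRingHom ℚ)).SplittingField)))
    (lam : ℂ) (hroot : Polynomial.aeval lam q = 0)
    (habs : ‖lam‖ = 1) :
    q.natDegree = 1 ∧ (lam = 1 ∨ lam = -1) := by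
  set q' := q.map (Int.castRingHom ℚ)
  set M := IntermediateField.adjoin ℚ (q'.rootSet ℂ)
  have hsplitℂ : (q'.map (algebraMap ℚ ℂ)).Splits := IsAlgClosed.splits _
  have : IsSplittingField ℚ M q' := IntermediateField.adjoin_rootSet_isSplittingField hsplitℂ
  have : Normal ℚ M := Normal.of_isSplittingField q'
  have : IsGalois ℚ (p.map (Int.castRingHom ℚ)).SplittingField :=
    { to_normal := SplittingField.instNormal _ }
  have hoddM : Odd (finrank ℚ M) := by
    rw [← Nat.card_eq_fintype_card, IsGalois.card_aut_eq_finrank] at hodd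
    exact hodd.of_dvd_nat (finrank_adjoin_rootSet_dvd hsplitℂ hsplit)
  have hlamM : lam ∈ M := by
    refine IntermediateField.subset_adjoin ℚ _ ((mem_rootSet_of_ne ?_).mpr ?_)
    · exact (Polynomial.map_ne_zero_iff (Int.castRingHom ℚ).injective_int).mpr hqirr.ne_zero
    · rwa [← aeval_map_algebraMap ℚ] at hroot
  have hlam := eq_one_or_eq_neg_one_of_im_eq_zero_of_norm_eq_one
    (Complex.conj_eq_iff_im.mp (conj_eq_self_of_mem_of_normal_of_odd_finrank M hoddM hlamM)) habs
  refine ⟨?_, hlam⟩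
  rcases hlam with rfl | rfl
  · exact natDegree_eq_one_of_irreducible_of_aeval_eq_zero (A := ℂ) (a := 1) hqirr
      (by simpa using hroot)
  · exact natDegree_eq_one_of_irreducible_of_aeval_eq_zero (A := ℂ) (a := -1) hqirr
      (by simpa using hroot)

/-- Let `p ∈ ℤ[x]` be monic of degree `n ≥ 2` whose splitting field over `ℚ` has
Galois group of odd order.  If `q ∈ ℤ[x]` is monic irreducible, splits in that
splitting field, and has a root `λ` of modulus one, then `q` is linear and
`λ = ±1`. -/
theorem stmt_9 (p q : Polynomial ℤ) (n : ℕ) (hn : 2 ≤ n)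
    (hmonic : p.Monic) (hdeg : p.natDegree = n)
    (hodd : Odd (Fintype.card ((p.map (Int.castRingHom ℚ)).SplittingField ≃ₐ[ℚ]
      (p.map (Int.castRingHom ℚ)).SplittingField)))
    (hqmonic : q.Monic) (hqirr : Irreducible q)
    (hsplit : Polynomial.Splits
      ((q.map (Int.castRingHom ℚ)).map
        (algebraMap ℚ (p.map (Int.castRingHom ℚ)).SplittingField)))
    (lam : ℂ) (hroot : Polynomial.aeval lam q = 0)
    (habs : ‖lam‖ = 1) :
    q.natDegree = 1 ∧ (lam = 1 ∨ lam = -1) :=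
  stmt_9_general p q hodd hqirr hsplit lam hroot habs
end

section
/- Let α₁,...,αₙ be the roots of a monic separable polynomial p₁ ∈ ℤ[x] of degree n ≥ 3 with all αᵢ distinct. If the polynomial p₂(x) = ∏_{1 ≤ j < i ≤ n} (x - αᵢαⱼ) factors over ℤ as a power rˢ of a single irreducible monic polynomial r, then deg r ≥ n - 1. -/
/-! Fix `a` with `α a ≠ 0`. The `n - 1` numbers `α a * α j` with `j ≠ a` are pairwise distinct
roots of `rˢ`, hence of `r`, so `r` has degree at least `n - 1`. -/

open Polynomial

theorem Function.Injective.exists_ne_zero {ι M₀ : Type*} [Nontrivial ι] [Zero M₀] {f : ι → M₀}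
    (hf : Function.Injective f) : ∃ i, f i ≠ 0 := by
  obtain ⟨i, j, hij⟩ := exists_pair_ne ι
  by_contra! h
  exact hij (hf ((h i).trans (h j).symm))

theorem isRoot_prod_X_sub_C_mul_of_ne {ι R : Type*} [Fintype ι] [LinearOrder ι] [CommRing R]
    (α : ι → R) {i j : ι} (hij : i ≠ j) :
    (∏ ij ∈ Finset.univ.filter (fun ij : ι × ι => ij.2 < ij.1),
      (X - C (α ij.1 * α ij.2))).IsRoot (α i * α j) := by
  wlog hji : j < i generalizing i j
  · simpa only [mul_comm] using this hij.symm (hij.lt_or_gt.resolve_right hji)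
  rw [IsRoot, eval_prod]
  exact Finset.prod_eq_zero (i := (i, j)) (by simp [hji]) (by simp)

theorem card_sub_one_le_natDegree_of_isRoot_mul {ι R : Type*} [Fintype ι] [DecidableEq ι]
    [CommRing R] [IsDomain R] {α : ι → R} (hα : Function.Injective α) {a : ι} (ha : α a ≠ 0)
    {f : R[X]} (hf : f ≠ 0) (hroot : ∀ j ≠ a, f.IsRoot (α a * α j)) :
    Fintype.card ι - 1 ≤ f.natDegree := by
  let Z := (Finset.univ.erase a).map ⟨(α a * α ·), fun _ _ h => hα (mul_left_cancel₀ ha h)⟩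
  have hsub : Z.val ⊆ f.roots := by
    intro x hx
    obtain ⟨j, hj, rfl⟩ := Finset.mem_map.mp hx
    exact (mem_roots hf).mpr (hroot j (Finset.ne_of_mem_erase hj))
  calc Fintype.card ι - 1 = Z.card := by
        rw [Finset.card_map, Finset.card_erase_of_mem (Finset.mem_univ a), Finset.card_univ]
    _ ≤ f.natDegree := card_le_degree_of_subset_roots hsub

theorem stmt_10_general (n : ℕ) (hn : 3 ≤ n)
    (α : Fin n → ℂ) (hinj : Function.Injective α)
    (r : Polynomial ℤ) (s : ℕ) (hrmonic : r.Monic)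
    (hfac : (r ^ s).map (Int.castRingHom ℂ) =
      ∏ ij ∈ Finset.univ.filter (fun ij : Fin n × Fin n => ij.2 < ij.1),
        (X - C (α ij.1 * α ij.2))) :
    n - 1 ≤ r.natDegree := by
  have : Nontrivial (Fin n) := Fin.nontrivial_iff_two_le.mpr (by omega)
  obtain ⟨a, ha⟩ := hinj.exists_ne_zero
  have hroot : ∀ j ≠ a, (r.map (Int.castRingHom ℂ)).IsRoot (α a * α j) := fun j hj => by
    have := isRoot_prod_X_sub_C_mul_of_ne α hj.symm
    rw [← hfac, Polynomial.map_pow, IsRoot, eval_pow] at this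
    exact eq_zero_of_pow_eq_zero this
  simpa [hrmonic.natDegree_map] using
    card_sub_one_le_natDegree_of_isRoot_mul hinj ha (hrmonic.map _).ne_zero hroot

/-- Let `α₁,…,αₙ` be the (distinct) roots of a monic separable `p₁ ∈ ℤ[x]` of
degree `n ≥ 3`.  If `p₂(x) = ∏_{j<i}(x - αᵢαⱼ)` factors over `ℤ` as a power
`rˢ` of a single monic irreducible polynomial `r`, then `deg r ≥ n - 1`. -/
theorem stmt_10 (n : ℕ) (hn : 3 ≤ n) (p₁ : Polynomial ℤ) (hmonic : p₁.Monic)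
    (hsep : p₁.Separable) (hdeg : p₁.natDegree = n)
    (α : Fin n → ℂ) (hinj : Function.Injective α)
    (hroots : p₁.map (Int.castRingHom ℂ) = ∏ i, (X - C (α i)))
    (r : Polynomial ℤ) (s : ℕ) (hs : 1 ≤ s) (hrmonic : r.Monic)
    (hrirr : Irreducible r)
    (hfac : (r ^ s).map (Int.castRingHom ℂ) =
      ∏ ij ∈ Finset.univ.filter (fun ij : Fin n × Fin n => ij.2 < ij.1),
        (X - C (α ij.1 * α ij.2))) :
    n - 1 ≤ r.natDegree :=
  stmt_10_general n hn α hinj r s hrmonic hfac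
end

section
/- Let α₁,...,αₙ (n ≥ 3) be the roots of a monic polynomial p₁ ∈ ℤ[x] of degree n with constant term (-1)^n, and suppose the set of roots has full rank (the only integer relations ∏αⱼ^{dⱼ} = 1 have all dⱼ equal). Then for 2 ≤ i, any monic factor q ∈ ℤ[x] of the polynomial pᵢ whose roots are products of i of the roots (with multiplicity, corresponding to degree-i words) has degree k satisfying k·i = n·d for some positive integer d. In particular n/gcd(n,i) divides k. -/
/-!
Write `P = ∏ⱼ αⱼ ^ cⱼ`, where `cⱼ` counts the occurrences of the letter `j` in the words of `M`.
Up to sign, `P` is the constant term of `q`, hence an integer. Since `∏ⱼ αⱼ = 1`, its inverse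
`∏ⱼ αⱼ ^ (N - cⱼ)`, with `N = ∑ⱼ cⱼ`, is an algebraic integer, so `P = ±1` and `P ^ 2 = 1`. Full rank forces all `cⱼ`
to be equal to some `d`, and counting letters gives `deg q · i = ∑ⱼ cⱼ = n · d`.
-/

open Polynomial

theorem Multiset.prod_map_eq_prod_pow_count {ι M : Type*} [Fintype ι] [DecidableEq ι]
    [CommMonoid M] (s : Multiset ι) (f : ι → M) :
    (s.map f).prod = ∏ j, f j ^ s.count j := by
  rw [Finset.prod_multiset_map_count]
  refine Finset.prod_subset (Finset.subset_univ _) fun j _ hj => ?_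
  rw [Multiset.count_eq_zero.mpr (by simpa using hj), pow_zero]

theorem Polynomial.coeff_zero_multiset_prod_X_sub_C {β R : Type*} [CommRing R] (s : Multiset β)
    (f : β → R) :
    (s.map fun b => X - C (f b)).prod.coeff 0 = (-1) ^ Multiset.card s * (s.map f).prod := by
  simp only [coeff_zero_eq_eval_zero, eval_multiset_prod, Multiset.map_map, Function.comp_def,
    eval_sub, eval_X, eval_C, zero_sub]
  rw [← Multiset.card_map f, ← Multiset.prod_map_neg, Multiset.map_map]
  rfl

theorem Polynomial.natDegree_multiset_prod_X_sub_C {β R : Type*} [CommRing R] [Nontrivial R]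
    (s : Multiset β) (f : β → R) :
    (s.map fun b => X - C (f b)).prod.natDegree = Multiset.card s := by
  simpa [Multiset.map_map, Function.comp_def] using natDegree_multiset_prod_X_sub_C_eq_card (s.map f)

theorem Nat.div_gcd_dvd_of_mul_eq_mul {n i k d : ℕ} (hn : 0 < n) (h : k * i = n * d) :
    n / n.gcd i ∣ k := by
  have hg : 0 < n.gcd i := Nat.gcd_pos_of_pos_left i hn
  refine (Nat.coprime_div_gcd_div_gcd hg).dvd_of_dvd_mul_right ⟨d, ?_⟩
  apply Nat.eq_of_mul_eq_mul_left hg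
  calc n.gcd i * (k * (i / n.gcd i)) = k * i := by
        rw [mul_left_comm, Nat.mul_div_cancel' (Nat.gcd_dvd_right n i)]
    _ = n * d := h
    _ = n.gcd i * (n / n.gcd i * d) := by
        rw [← mul_assoc, Nat.mul_div_cancel' (Nat.gcd_dvd_left n i)]

theorem Int.isUnit_of_mul_eq_one_of_isIntegral {K : Type*} [Field K] [CharZero K] {a : ℤ} {x : K}
    (hx : IsIntegral ℤ x) (h : (a : K) * x = 1) : IsUnit a := by
  have hx' : x = algebraMap ℚ K (a : ℚ)⁻¹ := by
    rw [map_inv₀, map_intCast, eq_inv_of_mul_eq_one_right h]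
  rw [hx', isIntegral_algebraMap_iff (algebraMap ℚ K).injective] at hx
  obtain ⟨b, hb⟩ := IsIntegrallyClosed.isIntegral_iff.mp hx
  refine IsUnit.of_mul_eq_one b (Int.cast_injective (α := ℚ) ?_)
  have ha : (a : ℚ) ≠ 0 := by rintro ha; simp [Int.cast_eq_zero.mp ha] at h
  rw [eq_intCast] at hb
  push_cast
  rw [hb, mul_inv_cancel₀ ha]

section RootsOfIntegerPolynomial

variable {K ι : Type*} [CommRing K] [Fintype ι] {p : ℤ[X]} {α : ι → K}

theorem isIntegral_of_map_eq_prod_X_sub_C (hp : p.Monic)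
    (hroots : p.map (Int.castRingHom K) = ∏ j, (X - C (α j))) (j : ι) : IsIntegral ℤ (α j) := by
  refine ⟨p, hp, ?_⟩
  rw [eval₂_eq_eval_map, algebraMap_int_eq, hroots, eval_prod]
  exact Finset.prod_eq_zero (Finset.mem_univ j) (by simp)

theorem prod_eq_one_of_map_eq_prod_X_sub_C
    (hroots : p.map (Int.castRingHom K) = ∏ j, (X - C (α j)))
    (hconst : p.coeff 0 = (-1) ^ Fintype.card ι) : ∏ j, α j = 1 := by
  have h := congrArg (coeff · 0) hroots
  simp only [coeff_map, hconst, coeff_zero_prod, coeff_sub, coeff_X_zero, coeff_C_zero, zero_sub,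
    Finset.prod_neg] at h
  have := congrArg ((-1) ^ Fintype.card ι * ·) h
  simpa [← mul_assoc, ← mul_pow] using this.symm

end RootsOfIntegerPolynomial

section Words

variable {κ ι : Type*} [Fintype κ]

def letters (M : Multiset (κ → ι)) : Multiset ι := M.bind fun m => Finset.univ.val.map m

theorem card_letters (M : Multiset (κ → ι)) :
    Multiset.card (letters M) = Multiset.card M * Fintype.card κ := by
  simp [letters, Multiset.card_bind, Function.comp_def, Multiset.map_const', Multiset.sum_replicate]

theorem prod_map_letters {R : Type*} [CommMonoid R] (M : Multiset (κ → ι)) (f : ι → R) :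
    ((letters M).map f).prod = (M.map fun m => ∏ t, f (m t)).prod := by
  simp only [letters, Multiset.map_bind, Multiset.prod_bind, Multiset.map_map]
  rfl

theorem mem_letters {M : Multiset (κ → ι)} {m : κ → ι} (hm : m ∈ M) (t : κ) : m t ∈ letters M :=
  Multiset.mem_bind.mpr ⟨m, hm, by simp⟩

end Words

section FullRank

variable {K ι : Type*} [Field K] [CharZero K] [Fintype ι] {α : ι → K}

theorem sq_prod_pow_eq_one_of_eq_intCast (hα : ∀ j, IsIntegral ℤ (α j)) (hprod : ∏ j, α j = 1)
    (c : ι → ℕ) {a : ℤ} (ha : ∏ j, α j ^ c j = a) : (∏ j, α j ^ c j) ^ 2 = 1 := by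
  set N := ∑ j, c j
  have hinv : (a : K) * ∏ j, α j ^ (N - c j) = 1 := by
    rw [← ha, ← Finset.prod_mul_distrib]
    calc _ = ∏ j, α j ^ N := Finset.prod_congr rfl fun j _ => by
          rw [← pow_add, Nat.add_sub_cancel' (Finset.single_le_sum (by simp) (Finset.mem_univ j))]
      _ = 1 := by rw [Finset.prod_pow, hprod, one_pow]
  have hint : IsIntegral ℤ (∏ j, α j ^ (N - c j)) := IsIntegral.prod _ fun j _ => (hα j).pow _
  rcases Int.isUnit_iff.mp (Int.isUnit_of_mul_eq_one_of_isIntegral hint hinv) with rfl | rfl <;>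
    simp [ha]

theorem exponents_eq_of_prod_pow_eq_intCast (hα : ∀ j, IsIntegral ℤ (α j)) (hprod : ∏ j, α j = 1)
    (hfr : ∀ d : ι → ℤ, ∏ j, α j ^ d j = 1 → ∀ j k, d j = d k)
    (c : ι → ℕ) {a : ℤ} (ha : ∏ j, α j ^ c j = a) (j k : ι) : c j = c k := by
  have h := hfr (fun j => ((2 * c j : ℕ) : ℤ)) (by
    simp only [zpow_natCast, pow_mul', Finset.prod_pow]
    exact sq_prod_pow_eq_one_of_eq_intCast hα hprod c ha) j k
  omega

end FullRank

theorem stmt_11_general (n : ℕ) (p₁ : Polynomial ℤ) (hmonic : p₁.Monic)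
    (hconst : p₁.coeff 0 = (-1) ^ n)
    (α : Fin n → ℂ)
    (hroots : p₁.map (Int.castRingHom ℂ) = ∏ j, (X - C (α j)))
    (hfr : ∀ d : Fin n → ℤ, (∏ j, α j ^ d j) = 1 → ∀ j k, d j = d k)
    (i : ℕ) (hi : 2 ≤ i)
    (q : Polynomial ℤ)
    (M : Multiset (Fin i → Fin n)) (hM : M ≠ 0)
    (hq : q.map (Int.castRingHom ℂ) =
      (M.map (fun m => X - C (∏ t, α (m t)))).prod) :
    (∃ d : ℕ, 0 < d ∧ q.natDegree * i = n * d) ∧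
    (n / Nat.gcd n i) ∣ q.natDegree := by
  set c : Fin n → ℕ := fun j => (letters M).count j
  have hk : q.natDegree = Multiset.card M := by
    rw [← natDegree_map_eq_of_injective (Int.castRingHom ℂ).injective_int, hq,
      natDegree_multiset_prod_X_sub_C]
  have hc0 : ((q.coeff 0 : ℤ) : ℂ) = (-1) ^ q.natDegree * ∏ j, α j ^ c j := by
    rw [← eq_intCast (Int.castRingHom ℂ), ← coeff_map, hq, coeff_zero_multiset_prod_X_sub_C,
      ← prod_map_letters, Multiset.prod_map_eq_prod_pow_count, hk]
  have hc : ∀ j k, c j = c k := by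
    refine exponents_eq_of_prod_pow_eq_intCast (isIntegral_of_map_eq_prod_X_sub_C hmonic hroots)
      (prod_eq_one_of_map_eq_prod_X_sub_C hroots (by simpa using hconst)) hfr c
      (a := (-1) ^ q.natDegree * q.coeff 0) ?_
    push_cast
    rw [hc0, ← mul_assoc, ← mul_pow]
    simp
  obtain ⟨w, hw⟩ := Multiset.exists_mem_of_ne_zero hM
  set j₀ : Fin n := w ⟨0, by omega⟩
  have hki : q.natDegree * i = n * c j₀ := by
    calc q.natDegree * i = Multiset.card (letters M) := by rw [card_letters, hk, Fintype.card_fin]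
      _ = ∑ j, c j := (Multiset.sum_count_eq_card (by simp)).symm
      _ = n * c j₀ := by simp [Finset.sum_congr rfl fun j _ => hc j j₀]
  have hpos : 0 < c j₀ := Multiset.count_pos.mpr (mem_letters hw _)
  exact ⟨⟨c j₀, hpos, hki⟩, Nat.div_gcd_dvd_of_mul_eq_mul j₀.pos hki⟩

/-- Let `α₁,…,αₙ` (`n ≥ 3`) be the roots of a monic `p₁ ∈ ℤ[x]` of degree `n`
with constant term `(-1)ⁿ`, and suppose the set of roots has full rank.  Then any
monic `q ∈ ℤ[x]` whose roots are products of `i` of the roots (degree-`i` words,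
`i ≥ 2`) has degree `k` satisfying `k·i = n·d` for some positive integer `d`; in
particular `n / gcd(n,i)` divides `k`. -/
theorem stmt_11 (n : ℕ) (hn : 3 ≤ n) (p₁ : Polynomial ℤ) (hmonic : p₁.Monic)
    (hdeg : p₁.natDegree = n) (hconst : p₁.coeff 0 = (-1) ^ n)
    (α : Fin n → ℂ)
    (hroots : p₁.map (Int.castRingHom ℂ) = ∏ j, (X - C (α j)))
    (hfr : ∀ d : Fin n → ℤ, (∏ j, α j ^ d j) = 1 → ∀ j k, d j = d k)
    (i : ℕ) (hi : 2 ≤ i)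
    (q : Polynomial ℤ) (hqmonic : q.Monic)
    (M : Multiset (Fin i → Fin n)) (hM : M ≠ 0)
    (hq : q.map (Int.castRingHom ℂ) =
      (M.map (fun m => X - C (∏ t, α (m t)))).prod) :
    (∃ d : ℕ, 0 < d ∧ q.natDegree * i = n * d) ∧
    (n / Nat.gcd n i) ∣ q.natDegree :=
  stmt_11_general n p₁ hmonic hconst α hroots hfr i hi q M hM hq
end

section
/- Let n₁ ≥ 3 be prime and 1 < i < n₁. Let p₁ ∈ ℤ[x] be a monic irreducible polynomial of degree n₁ with constant term ±1 whose roots have full rank. Then the degree of any irreducible factor over ℤ of the polynomial pᵢ whose roots are products of i roots of p₁ (degree-i words) is a multiple of n₁. -/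
/-!
Every root `α j` of `p₁` has an integral inverse, being a root of the reverse of `p₁`, whose
leading coefficient is `±1`. Up to sign, the constant term of `q` is the product of its roots,
`∏ j, α j ^ c j`, where `c j` counts the occurrences of the letter `j` in the words of `M`. So
this integer has an integral inverse and is `±1`. Its square is then a multiplicative relation
among the `α j`, so by full rank all `c j` are equal to some `c`. Counting letters gives
`n₁ * c = i * deg q`, and since the prime `n₁` does not divide `i`, it divides `deg q`.
-/

open Polynomial

theorem ne_zero_of_aeval_eq_zero {R A : Type*} [CommSemiring R] [Semiring A] [Nontrivial A]
    [Algebra R A] {p : R[X]} {x : A} (hx : aeval x p = 0) (hp : IsUnit (p.coeff 0)) : x ≠ 0 := by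
  rintro rfl
  rw [aeval_def, eval₂_at_zero] at hx
  exact (hp.map (algebraMap R A)).ne_zero hx

theorem isIntegral_inv_of_aeval_eq_zero {R K : Type*} [CommRing R] [Field K] [Algebra R K]
    {p : R[X]} {x : K} (hx : aeval x p = 0) (hp : IsUnit (p.coeff 0)) :
    IsIntegral R x⁻¹ := by
  have := (algebraMap R K).domain_nontrivial
  let := invertibleOfNonzero (ne_zero_of_aeval_eq_zero hx hp)
  have hrev : aeval x⁻¹ p.reverse = 0 := by
    rw [← invOf_eq_inv, aeval_def, eval₂_reverse_eq_zero_iff, ← aeval_def, hx]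
  have hlc : IsUnit p.reverse.leadingCoeff := by
    rwa [reverse_leadingCoeff, trailingCoeff_eq_coeff_zero hp.ne_zero]
  exact ⟨_, monic_of_isUnit_leadingCoeff_inv_smul hlc, by
    rw [← aeval_def, Units.smul_def, map_smul, hrev, smul_zero]⟩

theorem Int.isUnit_of_isIntegral_inv {K : Type*} [Field K] [CharZero K] {a : ℤ} (ha : a ≠ 0)
    (h : IsIntegral ℤ (a : K)⁻¹) : IsUnit a := by
  have hQ : IsIntegral ℤ (a : ℚ)⁻¹ := by
    rw [← isIntegral_algebraMap_iff (algebraMap ℚ K).injective]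
    simpa using h
  obtain ⟨b, hb⟩ := IsIntegrallyClosed.isIntegral_iff.mp hQ
  refine IsUnit.of_mul_eq_one b ?_
  have : (a : ℚ) * b = 1 := by rw [eq_intCast] at hb; rw [hb]; field_simp
  exact_mod_cast this

theorem coeff_zero_of_map_eq_prod_X_sub_C {R K : Type*} [CommRing R] [CommRing K] (f : R →+* K)
    {q : R[X]} {s : Multiset K} (hq : q.map f = (s.map fun r => X - C r).prod) :
    f (q.coeff 0) = (-1) ^ Multiset.card s * s.prod := by
  rw [← coeff_map, hq, coeff_zero_eq_eval_zero, eval_multiset_prod, Multiset.map_map]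
  simp only [Function.comp_def, eval_sub, eval_X, eval_C, zero_sub]
  exact Multiset.prod_map_neg s

theorem natDegree_eq_card_of_map_eq_prod_X_sub_C {R K : Type*} [CommRing R] [CommRing K]
    [Nontrivial K] {f : R →+* K} (hf : Function.Injective f) {q : R[X]} {s : Multiset K}
    (hq : q.map f = (s.map fun r => X - C r).prod) : q.natDegree = Multiset.card s := by
  rw [← natDegree_map_eq_of_injective hf, hq, natDegree_multiset_prod_X_sub_C_eq_card]

theorem sq_prod_eq_one_of_map_eq_prod_X_sub_C {K : Type*} [Field K] [CharZero K] {q : ℤ[X]}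
    {s : Multiset K} (hs₀ : ∀ x ∈ s, x ≠ 0) (hs : ∀ x ∈ s, IsIntegral ℤ x⁻¹)
    (hq : q.map (Int.castRingHom K) = (s.map fun r => X - C r).prod) :
    s.prod ^ 2 = 1 := by
  have hc := coeff_zero_of_map_eq_prod_X_sub_C _ hq
  rw [eq_intCast] at hc
  have hsign : ((-1 : K) ^ Multiset.card s) ^ 2 = 1 := by
    rw [← pow_mul, mul_comm, pow_mul, neg_one_sq, one_pow]
  have hc₀ : q.coeff 0 ≠ 0 := by
    have : (q.coeff 0 : K) ≠ 0 := by
      rw [hc]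
      exact mul_ne_zero (pow_ne_zero _ (neg_ne_zero.2 one_ne_zero))
        (Multiset.prod_ne_zero fun h => hs₀ 0 h rfl)
    exact_mod_cast this
  have hinv : IsIntegral ℤ (q.coeff 0 : K)⁻¹ := by
    rw [hc, mul_inv, ← Multiset.prod_map_inv', ← inv_pow, inv_neg, inv_one]
    exact (isIntegral_one.neg.pow _).mul
      (IsIntegral.multiset_prod fun y hy => by
        obtain ⟨x, hx, rfl⟩ := Multiset.mem_map.1 hy
        exact hs x hx)
  calc s.prod ^ 2 = ((-1) ^ Multiset.card s * s.prod) ^ 2 := by rw [mul_pow, hsign, one_mul]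
    _ = ((q.coeff 0 ^ 2 : ℤ) : K) := by rw [← hc]; push_cast; rfl
    _ = 1 := by rw [Int.isUnit_sq (Int.isUnit_of_isIntegral_inv hc₀ hinv)]; simp

def wordLetters {ι κ : Type*} [Fintype κ] (M : Multiset (κ → ι)) : Multiset ι :=
  M.bind fun m => Finset.univ.val.map m

theorem card_wordLetters {ι κ : Type*} [Fintype κ] (M : Multiset (κ → ι)) :
    Multiset.card (wordLetters M) = Multiset.card M * Fintype.card κ := by
  simp [wordLetters, Multiset.card_bind, Function.comp_def, Finset.card_univ]

theorem prod_map_wordLetters {ι κ G : Type*} [Fintype κ] [CommMonoid G] (M : Multiset (κ → ι))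
    (f : ι → G) : ((wordLetters M).map f).prod = (M.map fun m => ∏ t, f (m t)).prod := by
  simp only [wordLetters, Multiset.map_bind, Multiset.prod_bind, Multiset.map_map]
  rfl

theorem Multiset.card_eq_mul_count_of_count_eq {ι : Type*} [Fintype ι] [DecidableEq ι]
    (s : Multiset ι) (h : ∀ j k, s.count j = s.count k) (j₀ : ι) :
    Multiset.card s = Fintype.card ι * s.count j₀ := by
  rw [← Multiset.sum_count_eq_card (s := Finset.univ) fun a _ => Finset.mem_univ a,
    Finset.sum_congr rfl fun j _ => h j j₀, Finset.sum_const, Finset.card_univ, smul_eq_mul]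

theorem stmt_13_general (n₁ : ℕ) (hprime : n₁.Prime)
    (i : ℕ) (hi1 : 1 < i) (hi2 : i < n₁)
    (p₁ : Polynomial ℤ)
    (hconst : p₁.coeff 0 = 1 ∨ p₁.coeff 0 = -1)
    (α : Fin n₁ → ℂ)
    (hroots : p₁.map (Int.castRingHom ℂ) = ∏ j, (X - C (α j)))
    (hfr : ∀ d : Fin n₁ → ℤ, (∏ j, α j ^ d j) = 1 → ∀ j k, d j = d k)
    (q : Polynomial ℤ)
    (M : Multiset (Fin i → Fin n₁))
    (hq : q.map (Int.castRingHom ℂ) =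
      (M.map (fun m => X - C (∏ t, α (m t)))).prod) :
    n₁ ∣ q.natDegree := by
  classical
  have hroot (j : Fin n₁) : aeval (α j) p₁ = 0 := by
    rw [← eval_map_algebraMap, algebraMap_int_eq, hroots, eval_prod]
    exact Finset.prod_eq_zero (Finset.mem_univ j) (by simp)
  have hunit : IsUnit (p₁.coeff 0) := by rcases hconst with h | h <;> simp [h]
  have hq' : q.map (Int.castRingHom ℂ) =
      ((M.map fun m => ∏ t, α (m t)).map fun r => X - C r).prod := by
    rw [hq, Multiset.map_map]
    rfl
  have hsq := sq_prod_eq_one_of_map_eq_prod_X_sub_C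
    (by simp [Finset.prod_ne_zero_iff, ne_zero_of_aeval_eq_zero (hroot _) hunit])
    (by simp [← Finset.prod_inv_distrib, IsIntegral.prod,
      isIntegral_inv_of_aeval_eq_zero (hroot _) hunit]) hq'
  rw [← prod_map_wordLetters, Multiset.prod_map_eq_prod_pow_count, ← Finset.prod_pow] at hsq
  have hcount (j k : Fin n₁) : (wordLetters M).count j = (wordLetters M).count k := by
    have := hfr (fun j => ((wordLetters M).count j * 2 : ℕ))
      (by simpa only [zpow_natCast, pow_mul] using hsq) j k
    omega
  have hcard := (wordLetters M).card_eq_mul_count_of_count_eq hcount ⟨0, hprime.pos⟩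
  rw [card_wordLetters, Fintype.card_fin, Fintype.card_fin] at hcard
  rw [natDegree_eq_card_of_map_eq_prod_X_sub_C (Int.castRingHom ℂ).injective_int hq',
    Multiset.card_map]
  exact Nat.Coprime.dvd_of_dvd_mul_right
    (hprime.coprime_iff_not_dvd.2 (Nat.not_dvd_of_pos_of_lt (by omega) hi2)) ⟨_, hcard⟩

/-- Let `n₁ ≥ 3` be prime and `1 < i < n₁`.  Let `p₁ ∈ ℤ[x]` be monic irreducible
of degree `n₁` with constant term `±1` whose set of roots has full rank.  Then
the degree of any irreducible factor over `ℤ` of the polynomial whose roots are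
products of `i` roots of `p₁` (degree-`i` words) is a multiple of `n₁`. -/
theorem stmt_13 (n₁ : ℕ) (hprime : n₁.Prime) (hn : 3 ≤ n₁)
    (i : ℕ) (hi1 : 1 < i) (hi2 : i < n₁)
    (p₁ : Polynomial ℤ) (hmonic : p₁.Monic) (hirr : Irreducible p₁)
    (hdeg : p₁.natDegree = n₁)
    (hconst : p₁.coeff 0 = 1 ∨ p₁.coeff 0 = -1)
    (α : Fin n₁ → ℂ)
    (hroots : p₁.map (Int.castRingHom ℂ) = ∏ j, (X - C (α j)))
    (hfr : ∀ d : Fin n₁ → ℤ, (∏ j, α j ^ d j) = 1 → ∀ j k, d j = d k)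
    (q : Polynomial ℤ) (hqmonic : q.Monic) (hqirr : Irreducible q)
    (M : Multiset (Fin i → Fin n₁)) (hM : M ≠ 0)
    (hq : q.map (Int.castRingHom ℂ) =
      (M.map (fun m => X - C (∏ t, α (m t)))).prod) :
    n₁ ∣ q.natDegree :=
  stmt_13_general n₁ hprime i hi1 hi2 p₁ hconst α hroots hfr q M hq
end

section
/- Let r₁, r₂ ∈ ℤ[x] be a monic irreducible quadratic and a monic irreducible cubic, with roots α₁,α₂ and α₃,α₄,α₅ respectively, each with constant term ±1 (so the roots are algebraic units) and no roots of modulus one. Then α₁α₃ has degree 6 over ℚ; hence the sextic polynomial r₁∧r₂(x) = ∏_{i∈{1,2}, j∈{3,4,5}} (x - αᵢαⱼ) is irreducible over ℚ. -/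
/-!
The compositum `K = ℚ(α₀) ⊔ ℚ(α₂)` has degree `2 · 3 = 6` because the degrees are coprime, and
`α₀α₂` generates `K` as soon as distinct embeddings `K → ℂ` take distinct values on it. An
embedding is determined by the images of `α₀` and `α₂`, which are roots of `r₁` and `r₂`, so it
suffices that the six products `αᵢαⱼ` are pairwise distinct. The only possible coincidence is
`αᵢαⱼ = αᵢ'αⱼ'` with `i ≠ i'` and `j ≠ j'`. Then `αⱼ' = t αⱼ` with `t = αᵢ / αᵢ'`, which lies in
`ℚ(αᵢ)` since `αᵢαᵢ' ∈ ℚ`; as the cubic stays irreducible over `ℚ(αᵢ)`, `t αₖ` is again a root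
for the third root `αₖ`. The only case that is not absurd, `t αₖ = αⱼ`, gives
`αⱼ³ = αⱼ αⱼ' αₖ = ±1`, contradicting `|αⱼ| ≠ 1`. The sextic `r₁ ∧ r₂` is then the minimal
polynomial of `α₀α₂`.
-/

open Polynomial IntermediateField Module

theorem Multiset.exists_eq_cons_cons_of_mem {α : Type*} {s : Multiset α} {x y : α}
    (hx : x ∈ s) (hy : y ∈ s) (hxy : x ≠ y) : ∃ u, s = x ::ₘ y ::ₘ u := by
  obtain ⟨t, rfl⟩ := Multiset.exists_cons_of_mem hx
  obtain ⟨u, rfl⟩ := Multiset.exists_cons_of_mem ((Multiset.mem_cons.mp hy).resolve_left hxy.symm)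
  exact ⟨u, rfl⟩

section

variable {F E : Type*} [Field F] [Field E] [Algebra F E]

theorem mem_aroots_minpoly_self {x : E} (hx : IsIntegral F x) : x ∈ (minpoly F x).aroots E :=
  mem_aroots.mpr ⟨minpoly.ne_zero hx, minpoly.aeval F x⟩

theorem ne_zero_of_mem_aroots_minpoly {x y : E} (hx : IsIntegral F x)
    (hdeg : (minpoly F x).natDegree ≠ 1) (hy : y ∈ (minpoly F x).aroots E) : y ≠ 0 := by
  have hx0 : x ≠ 0 := by
    rintro rfl
    simp [minpoly.zero] at hdeg
  exact ((isConjRoot_iff_mem_minpoly_aroots hx).mpr hy).ne_zero hx0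

theorem aeval_smul_eq_zero_of_aeval_minpoly {x y : E} (hy : aeval y (minpoly F x) = 0) (t : F)
    {f : F[X]} (hf : aeval (t • x) f = 0) : aeval (t • y) f = 0 := by
  have hcomp (z : E) : aeval z (f.comp (C t * X)) = aeval (t • z) f := by
    simp [aeval_comp, Algebra.smul_def]
  rw [← hcomp] at hf ⊢
  exact aeval_eq_zero_of_dvd_aeval_eq_zero (minpoly.dvd F x hf) hy

theorem eq_minpoly_of_map_eq_prod_X_sub_C {ι : Type*} {q : F[X]} {s : Finset ι} {f : ι → E}
    (hq : q.map (algebraMap F E) = ∏ i ∈ s, (X - C (f i))) {i₀ : ι} (hi₀ : i₀ ∈ s)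
    (hx : IsIntegral F (f i₀)) (hcard : s.card ≤ (minpoly F (f i₀)).natDegree) :
    q = minpoly F (f i₀) := by
  have hmonic : (∏ i ∈ s, (X - C (f i))).Monic :=
    monic_prod_of_monic _ _ fun i _ => monic_X_sub_C _
  have hdeg : q.natDegree = s.card := by
    rw [← natDegree_map (algebraMap F E), hq,
      natDegree_prod_of_monic _ _ fun i _ => monic_X_sub_C _]
    simp
  have hroot : aeval (f i₀) q = 0 := by
    rw [aeval_def, eval₂_eq_eval_map, hq, eval_prod]
    exact Finset.prod_eq_zero hi₀ (by simp)
  refine eq_of_monic_of_dvd_of_natDegree_le (minpoly.monic hx)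
    ((algebraMap F E).injective.monic_map_iff.mpr (hq ▸ hmonic)) (minpoly.dvd F _ hroot) ?_
  rwa [hdeg]

theorem finrank_adjoin_sup_adjoin_of_coprime {a b : E} (ha : IsIntegral F a)
    (hb : IsIntegral F b) (hab : (minpoly F a).natDegree.Coprime (minpoly F b).natDegree) :
    finrank F ↥(F⟮a⟯ ⊔ F⟮b⟯) = (minpoly F a).natDegree * (minpoly F b).natDegree := by
  rw [← adjoin.finrank ha, ← adjoin.finrank hb] at hab ⊢
  exact (LinearDisjoint.of_finrank_coprime hab).finrank_sup

theorem minpoly_adjoin_eq_map_of_coprime {a b : E} (ha : IsIntegral F a) (hb : IsIntegral F b)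
    (hab : (minpoly F a).natDegree.Coprime (minpoly F b).natDegree) :
    minpoly F⟮a⟯ b = (minpoly F b).map (algebraMap F F⟮a⟯) := by
  have hb' : IsIntegral F⟮a⟯ b := hb.tower_top
  have hsup : F⟮a⟯⟮b⟯.restrictScalars F = F⟮a⟯ ⊔ F⟮b⟯ := by
    rw [adjoin_simple_adjoin_simple, ← adjoin_union, Set.singleton_union]
  have htower : (minpoly F a).natDegree * (minpoly F⟮a⟯ b).natDegree
      = (minpoly F a).natDegree * (minpoly F b).natDegree := by
    rw [← finrank_adjoin_sup_adjoin_of_coprime ha hb hab, ← hsup, ← adjoin.finrank ha,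
      ← adjoin.finrank hb']
    exact finrank_mul_finrank F F⟮a⟯ F⟮a⟯⟮b⟯
  refine (eq_of_monic_of_dvd_of_natDegree_le (minpoly.monic hb') ((minpoly.monic hb).map _)
    (minpoly.dvd_map_of_isScalarTower F F⟮a⟯ b) ?_).symm
  rw [natDegree_map, Nat.eq_of_mul_eq_mul_left (minpoly.natDegree_pos ha) htower]

theorem mul_mem_aroots_minpoly_of_coprime {a b b' : E} (ha : IsIntegral F a)
    (hb : IsIntegral F b) (hab : (minpoly F a).natDegree.Coprime (minpoly F b).natDegree)
    (t : F⟮a⟯) (htb : t * b ∈ (minpoly F b).aroots E) (hb' : b' ∈ (minpoly F b).aroots E) :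
    t * b' ∈ (minpoly F b).aroots E := by
  have hmem (z : E) : z ∈ (minpoly F b).aroots E ↔ aeval z (minpoly F b) = 0 := by
    simp [minpoly.ne_zero hb]
  have hconj : aeval b' (minpoly F⟮a⟯ b) = 0 := by
    rwa [minpoly_adjoin_eq_map_of_coprime ha hb hab, aeval_map_algebraMap, ← hmem]
  have key := aeval_smul_eq_zero_of_aeval_minpoly hconj t
    (f := (minpoly F b).map (algebraMap F F⟮a⟯))
    (by rwa [aeval_map_algebraMap, Algebra.smul_def, ← hmem])
  rwa [aeval_map_algebraMap, Algebra.smul_def, ← hmem] at key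

theorem algHom_mem_rootSet_minpoly {K : IntermediateField F E} (σ : K →ₐ[F] E) {x : K}
    (hx : IsIntegral F (x : E)) : σ x ∈ (minpoly F (x : E)).rootSet E := by
  refine mem_rootSet.mpr ⟨minpoly.ne_zero hx, ?_⟩
  rw [aeval_algHom_apply, ← minpoly_eq, minpoly.aeval, map_zero]

variable [IsAlgClosed E]

theorem natDegree_minpoly_mul_of_coprime [PerfectField F] {a b : E}
    (ha : IsIntegral F a) (hb : IsIntegral F b)
    (hab : (minpoly F a).natDegree.Coprime (minpoly F b).natDegree)
    (hinj : Set.InjOn (fun z : E × E => z.1 * z.2)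
      ((minpoly F a).rootSet E ×ˢ (minpoly F b).rootSet E)) :
    (minpoly F (a * b)).natDegree = (minpoly F a).natDegree * (minpoly F b).natDegree := by
  have := adjoin.finiteDimensional ha
  have := adjoin.finiteDimensional hb
  set K := F⟮a⟯ ⊔ F⟮b⟯
  have hK : K = adjoin F {a, b} := by rw [← Set.singleton_union, adjoin_union]
  let A : K := ⟨a, le_sup_left (a := F⟮a⟯) (mem_adjoin_simple_self F a)⟩
  let B : K := ⟨b, le_sup_right (a := F⟮a⟯) (mem_adjoin_simple_self F b)⟩
  have hprim : F⟮A * B⟯ = ⊤ := by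
    refine (Field.primitive_element_iff_algHom_eq_of_eval' F E
      (fun _ => IsAlgClosed.splits _) _).mpr fun σ τ hστ => ?_
    simp only [map_mul] at hστ
    have hroots (φ : K →ₐ[F] E) :
        (φ A, φ B) ∈ (minpoly F a).rootSet E ×ˢ (minpoly F b).rootSet E :=
      ⟨algHom_mem_rootSet_minpoly φ (x := A) ha, algHom_mem_rootSet_minpoly φ (x := B) hb⟩
    obtain ⟨hA, hB⟩ := Prod.ext_iff.mp <| hinj (hroots σ) (hroots τ) hστ
    refine algHom_ext_of_eq_adjoin F hK ?_
    rintro x (rfl | rfl)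
    exacts [hA, hB]
  rw [← finrank_adjoin_sup_adjoin_of_coprime ha hb hab,
    ← (Field.primitive_element_iff_minpoly_natDegree_eq F _).mp hprim, minpoly_eq]
  rfl

theorem algebraMap_coeff_zero_eq_prod_aroots {p : F[X]} (hp : p.Monic) :
    algebraMap F E (p.coeff 0) = (-1) ^ p.natDegree * (p.aroots E).prod := by
  rw [← coeff_map, (IsAlgClosed.splits _).coeff_zero_eq_prod_roots_of_monic (hp.map _),
    natDegree_map, aroots_def]

theorem mul_eq_algebraMap_coeff_zero_of_natDegree_minpoly_eq_two {a a' : E}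
    (ha : IsIntegral F a) (ha2 : (minpoly F a).natDegree = 2)
    (ha' : a' ∈ (minpoly F a).aroots E) (haa' : a ≠ a') :
    a * a' = algebraMap F E ((minpoly F a).coeff 0) := by
  obtain ⟨u, hu⟩ := Multiset.exists_eq_cons_cons_of_mem (mem_aroots_minpoly_self ha) ha' haa'
  have hu0 : u = 0 := by
    simpa [hu, ha2] using IsAlgClosed.card_aroots_eq_natDegree (p := minpoly F a) (B := E)
  simp [algebraMap_coeff_zero_eq_prod_aroots (minpoly.monic ha), hu, hu0, ha2]

theorem mem_adjoin_simple_of_natDegree_minpoly_eq_two {a a' : E} (ha : IsIntegral F a)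
    (ha2 : (minpoly F a).natDegree = 2) (ha' : a' ∈ (minpoly F a).aroots E) : a' ∈ F⟮a⟯ := by
  by_cases haa' : a = a'
  · exact haa' ▸ mem_adjoin_simple_self F a
  have ha0 : a ≠ 0 := ne_zero_of_mem_aroots_minpoly ha (by omega) (mem_aroots_minpoly_self ha)
  rw [eq_div_of_mul_eq ha0 ((mul_comm a' a).trans
    (mul_eq_algebraMap_coeff_zero_of_natDegree_minpoly_eq_two ha ha2 ha' haa'))]
  exact div_mem (IntermediateField.algebraMap_mem _ _) (mem_adjoin_simple_self F a)

theorem exists_aroots_minpoly_eq_of_natDegree_eq_three {b b' : E}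
    (hb : IsIntegral F b) (hb3 : (minpoly F b).natDegree = 3)
    (hb' : b' ∈ (minpoly F b).aroots E) (hbb' : b ≠ b') :
    ∃ b'', (minpoly F b).aroots E = {b, b', b''} := by
  obtain ⟨v, hv⟩ := Multiset.exists_eq_cons_cons_of_mem (mem_aroots_minpoly_self hb) hb' hbb'
  obtain ⟨b'', rfl⟩ : ∃ b'', v = {b''} := Multiset.card_eq_one.mp <| by
    simpa [hv, hb3] using IsAlgClosed.card_aroots_eq_natDegree (p := minpoly F b) (B := E)
  exact ⟨b'', hv⟩

theorem pow_three_eq_neg_coeff_zero_of_mul_eq_mul [PerfectField F] {a a' b b' : E}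
    (ha : IsIntegral F a) (hb : IsIntegral F b)
    (ha2 : (minpoly F a).natDegree = 2) (hb3 : (minpoly F b).natDegree = 3)
    (ha' : a' ∈ (minpoly F a).aroots E) (hb' : b' ∈ (minpoly F b).aroots E)
    (haa' : a ≠ a') (hbb' : b ≠ b') (h : a * b = a' * b') :
    b ^ 3 = -algebraMap F E ((minpoly F b).coeff 0) := by
  have ha0 : a ≠ 0 := ne_zero_of_mem_aroots_minpoly ha (by omega) (mem_aroots_minpoly_self ha)
  have ha'0 : a' ≠ 0 := ne_zero_of_mem_aroots_minpoly ha (by omega) ha'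
  obtain ⟨b'', hv⟩ := exists_aroots_minpoly_eq_of_natDegree_eq_three hb hb3 hb' hbb'
  have hb'' : b'' ∈ (minpoly F b).aroots E := by rw [hv]; simp
  have hb''0 : b'' ≠ 0 := ne_zero_of_mem_aroots_minpoly hb (by omega) hb''
  have hnodup := nodup_roots
    ((PerfectField.separable_of_irreducible (minpoly.irreducible hb)).map (f := algebraMap F E))
  rw [← aroots_def, hv] at hnodup
  simp only [Multiset.insert_eq_cons, Multiset.nodup_cons, Multiset.mem_cons,
    Multiset.mem_singleton] at hnodup
  have hprod : b * b' * b'' = -algebraMap F E ((minpoly F b).coeff 0) := by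
    simp [algebraMap_coeff_zero_eq_prod_aroots (minpoly.monic hb), hv, hb3]
    ring
  have hb'_eq : a / a' * b = b' := by
    field_simp
    rw [h]
  let t : F⟮a⟯ := ⟨a / a', div_mem (mem_adjoin_simple_self F a)
    (mem_adjoin_simple_of_natDegree_minpoly_eq_two ha ha2 ha')⟩
  have htb'' := mul_mem_aroots_minpoly_of_coprime ha hb (by rw [ha2, hb3]; norm_num) t
    (show a / a' * b ∈ _ by rwa [hb'_eq]) hb''
  simp only [t, hv, Multiset.insert_eq_cons, Multiset.mem_cons, Multiset.mem_singleton] at htb''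
  rcases htb'' with htb | htb' | htb''
  · rw [← hprod, ← hb'_eq]
    linear_combination (-b ^ 2) * htb
  · rw [← hb'_eq] at htb'
    exact (hnodup.1 (Or.inr (mul_left_cancel₀ (div_ne_zero ha0 ha'0) htb').symm)).elim
  · exact absurd ((div_eq_one_iff_eq ha'0).mp ((mul_eq_right₀ hb''0).mp htb'')) haa'

end

theorem minpoly_eq_map_intCast {L : Type*} [Field L] [CharZero L] {r : ℤ[X]} (hm : r.Monic)
    (hi : Irreducible r) {x : L} (hx : aeval x r = 0) :
    minpoly ℚ x = r.map (Int.castRingHom ℚ) := by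
  refine (minpoly.eq_of_irreducible_of_monic
    ((IsPrimitive.Int.irreducible_iff_irreducible_map_cast hm.isPrimitive).mp hi) ?_
    (hm.map _)).symm
  rwa [← algebraMap_int_eq, aeval_map_algebraMap]

theorem injOn_mul_rootSet_of_natDegree_minpoly_eq_two_three {a b : ℂ}
    (ha : IsIntegral ℚ a) (hb : IsIntegral ℚ b)
    (ha2 : (minpoly ℚ a).natDegree = 2) (hb3 : (minpoly ℚ b).natDegree = 3)
    (hb0 : (minpoly ℚ b).coeff 0 = 1 ∨ (minpoly ℚ b).coeff 0 = -1)
    (hnorm : ∀ z ∈ (minpoly ℚ b).rootSet ℂ, ‖z‖ ≠ 1) :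
    Set.InjOn (fun z : ℂ × ℂ => z.1 * z.2)
      ((minpoly ℚ a).rootSet ℂ ×ˢ (minpoly ℚ b).rootSet ℂ) := by
  have mem_aroots_iff {p : ℚ[X]} {z : ℂ} : z ∈ p.rootSet ℂ ↔ z ∈ p.aroots ℂ :=
    mem_rootSet'.trans mem_aroots'.symm
  rintro ⟨a₁, b₁⟩ ⟨ha₁, hb₁⟩ ⟨a₂, b₂⟩ ⟨ha₂, hb₂⟩ (h : a₁ * b₁ = a₂ * b₂)
  have hca : IsConjRoot ℚ a a₁ := (isConjRoot_iff_mem_minpoly_rootSet ha).mpr ha₁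
  have hcb : IsConjRoot ℚ b b₁ := (isConjRoot_iff_mem_minpoly_rootSet hb).mpr hb₁
  replace ha := hca.isIntegral ha
  replace hb := hcb.isIntegral hb
  rw [isConjRoot_def.mp hca] at ha2 ha₂
  rw [isConjRoot_def.mp hcb] at hb3 hb0 hb₂
  by_cases haa : a₁ = a₂
  · subst haa
    exact Prod.ext rfl (mul_left_cancel₀ (ne_zero_of_mem_aroots_minpoly ha (by omega)
      (mem_aroots_minpoly_self ha)) h)
  by_cases hbb : b₁ = b₂
  · subst hbb
    exact Prod.ext (mul_right_cancel₀ (ne_zero_of_mem_aroots_minpoly hb (by omega)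
      (mem_aroots_minpoly_self hb)) h) rfl
  have hcube := pow_three_eq_neg_coeff_zero_of_mul_eq_mul ha hb ha2 hb3 (mem_aroots_iff.mp ha₂)
    (mem_aroots_iff.mp hb₂) haa hbb h
  refine (hnorm b₁ hb₁ ?_).elim
  rw [← pow_eq_one_iff_of_nonneg (norm_nonneg b₁) three_ne_zero, ← norm_pow, hcube]
  rcases hb0 with h0 | h0 <;> simp [h0]

theorem natDegree_minpoly_mul_of_natDegree_minpoly_eq_two_three {a b : ℂ}
    (ha : IsIntegral ℚ a) (hb : IsIntegral ℚ b)
    (ha2 : (minpoly ℚ a).natDegree = 2) (hb3 : (minpoly ℚ b).natDegree = 3)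
    (hb0 : (minpoly ℚ b).coeff 0 = 1 ∨ (minpoly ℚ b).coeff 0 = -1)
    (hnorm : ∀ z ∈ (minpoly ℚ b).rootSet ℂ, ‖z‖ ≠ 1) :
    (minpoly ℚ (a * b)).natDegree = 6 := by
  rw [natDegree_minpoly_mul_of_coprime ha hb (by rw [ha2, hb3]; norm_num)
    (injOn_mul_rootSet_of_natDegree_minpoly_eq_two_three ha hb ha2 hb3 hb0 hnorm), ha2, hb3]

theorem stmt_19_general (r₁ r₂ : Polynomial ℤ)
    (h₁m : r₁.Monic) (h₁i : Irreducible r₁) (h₁d : r₁.natDegree = 2)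
    (h₂m : r₂.Monic) (h₂i : Irreducible r₂) (h₂d : r₂.natDegree = 3)
    (h₂c : r₂.coeff 0 = 1 ∨ r₂.coeff 0 = -1)
    (α : Fin 5 → ℂ)
    (h₁r : r₁.map (Int.castRingHom ℂ) = (X - C (α 0)) * (X - C (α 1)))
    (h₂r : r₂.map (Int.castRingHom ℂ)
      = (X - C (α 2)) * (X - C (α 3)) * (X - C (α 4)))
    (habs : ∀ i, ‖α i‖ ≠ 1) :
    (minpoly ℚ (α 0 * α 2)).natDegree = 6 ∧
    ∀ q : Polynomial ℚ,
      q.map (algebraMap ℚ ℂ)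
        = ∏ i ∈ ({0, 1} : Finset (Fin 5)), ∏ j ∈ ({2, 3, 4} : Finset (Fin 5)),
            (X - C (α i * α j)) →
      Irreducible q := by
  have hr₁ : aeval (α 0) r₁ = 0 := by
    rw [aeval_def, eval₂_eq_eval_map, algebraMap_int_eq, h₁r]
    simp
  have hr₂ (z : ℂ) : aeval z r₂ = 0 ↔ z = α 2 ∨ z = α 3 ∨ z = α 4 := by
    rw [aeval_def, eval₂_eq_eval_map, algebraMap_int_eq, h₂r]
    simp [sub_eq_zero, or_assoc]
  have ha : IsIntegral ℚ (α 0) := (show IsIntegral ℤ (α 0) from ⟨r₁, h₁m, hr₁⟩).tower_top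
  have hb : IsIntegral ℚ (α 2) :=
    (show IsIntegral ℤ (α 2) from ⟨r₂, h₂m, (hr₂ _).mpr (Or.inl rfl)⟩).tower_top
  have hm₁ := minpoly_eq_map_intCast h₁m h₁i hr₁
  have hm₂ := minpoly_eq_map_intCast h₂m h₂i ((hr₂ (α 2)).mpr (Or.inl rfl))
  have hnorm : ∀ z ∈ (minpoly ℚ (α 2)).rootSet ℂ, ‖z‖ ≠ 1 := by
    intro z hz
    rw [mem_rootSet_of_ne (minpoly.ne_zero hb), hm₂, ← algebraMap_int_eq, aeval_map_algebraMap,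
      hr₂] at hz
    rcases hz with rfl | rfl | rfl <;> exact habs _
  have hcoeff : (minpoly ℚ (α 2)).coeff 0 = 1 ∨ (minpoly ℚ (α 2)).coeff 0 = -1 := by
    rw [hm₂, coeff_map]
    rcases h₂c with h | h <;> simp [h]
  have hdeg := natDegree_minpoly_mul_of_natDegree_minpoly_eq_two_three ha hb
    (by rw [hm₁, h₁m.natDegree_map, h₁d]) (by rw [hm₂, h₂m.natDegree_map, h₂d]) hcoeff hnorm
  refine ⟨hdeg, fun q hq => ?_⟩
  rw [← Finset.prod_product'] at hq
  rw [eq_minpoly_of_map_eq_prod_X_sub_C hq (i₀ := (0, 2)) (by decide) (ha.mul hb)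
    (by rw [hdeg]; rfl)]
  exact minpoly.irreducible (ha.mul hb)

/-- Let `r₁, r₂ ∈ ℤ[x]` be a monic irreducible quadratic and a monic irreducible
cubic, each with constant term `±1` and no roots of modulus one, with roots
`α₀,α₁` and `α₂,α₃,α₄` respectively.  Then `α₀α₂` has degree `6` over `ℚ`; hence
the sextic `r₁∧r₂(x) = ∏_{i∈{0,1}, j∈{2,3,4}}(x - αᵢαⱼ)` is irreducible
over `ℚ`. -/
theorem stmt_19 (r₁ r₂ : Polynomial ℤ)
    (h₁m : r₁.Monic) (h₁i : Irreducible r₁) (h₁d : r₁.natDegree = 2)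
    (h₁c : r₁.coeff 0 = 1 ∨ r₁.coeff 0 = -1)
    (h₂m : r₂.Monic) (h₂i : Irreducible r₂) (h₂d : r₂.natDegree = 3)
    (h₂c : r₂.coeff 0 = 1 ∨ r₂.coeff 0 = -1)
    (α : Fin 5 → ℂ)
    (h₁r : r₁.map (Int.castRingHom ℂ) = (X - C (α 0)) * (X - C (α 1)))
    (h₂r : r₂.map (Int.castRingHom ℂ)
      = (X - C (α 2)) * (X - C (α 3)) * (X - C (α 4)))
    (habs : ∀ i, ‖α i‖ ≠ 1) :
    (minpoly ℚ (α 0 * α 2)).natDegree = 6 ∧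
    ∀ q : Polynomial ℚ,
      q.map (algebraMap ℚ ℂ)
        = ∏ i ∈ ({0, 1} : Finset (Fin 5)), ∏ j ∈ ({2, 3, 4} : Finset (Fin 5)),
            (X - C (α i * α j)) →
      Irreducible q :=
  stmt_19_general r₁ r₂ h₁m h₁i h₁d h₂m h₂i h₂d h₂c α h₁r h₂r habs
end
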